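/- arXiv:2403.01488 — 11 statements merged into one kernel-verified Lean document; each statement's English description precedes it below -/
import Mathlib

section
/- Suppose a > -2 and |f_j| ≤ B·ρ^{-j} for all j ≥ 2, where B, ρ > 0. If the solution m_k = (-1)^k Γ(k+a) Σ_{j=2}^k (-1)^j f_j/Γ(j+a) of the recursion m_k + (k-1+a)m_{k-1} = f_k satisfies S_∞ := Σ_{j=2}^∞ (-1)^j f_j/Γ(j+a) = 0, then there exist constants C > 0 and k_0 such that |m_k| ≤ C·ρ^{-k} for all k ≥ k_0; in particular the power series Σ m_k x^k converges absolutely for |x| < ρ. -/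
open Finset Filter Real

/-! Since `S_∞ = 0`, the partial sum in `m_k` equals minus the tail `Σ_{j>k} (-1)^j f_j/Γ(j+a)`.
Once `k + a ≥ 1`, the functional equation gives `Γ(k+a) (k+a)^n ≤ Γ(k+a+n)`, so the `(k+n)`-th term
of the tail, multiplied by `Γ(k+a)`, is at most `B ρ^{-k} (ρ(k+a))^{-n}`. For `ρ(k+a) ≥ 2` the tail
is thus dominated by `B ρ^{-k} Σ_{n≥1} 2^{-n} = B ρ^{-k}`. -/

lemma Real.Gamma_mul_pow_le_Gamma_add_nat {x : ℝ} (hx : 1 ≤ x) (n : ℕ) :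
    Gamma x * x ^ n ≤ Gamma (x + n) := by
  induction n with
  | zero => simp
  | succ n ih =>
    have hxn : 1 ≤ x + n := le_add_of_le_of_nonneg hx n.cast_nonneg
    have hΓx : 0 ≤ Gamma x * x ^ n :=
      mul_nonneg (Gamma_pos_of_pos (by linarith)).le (pow_nonneg (by linarith) n)
    calc Gamma x * x ^ (n + 1) = x * (Gamma x * x ^ n) := by ring
      _ ≤ (x + n) * Gamma (x + n) := mul_le_mul (by linarith) ih hΓx (by linarith)
      _ = Gamma (x + ↑(n + 1)) := by
        rw [Nat.cast_succ, ← add_assoc, Gamma_add_one (by linarith)]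

lemma Finset.sum_Icc_eq_sum_range_ite {M : Type*} [AddCommMonoid M] (h : ℕ → M) (l k : ℕ) :
    ∑ j ∈ Icc l k, h j = ∑ j ∈ range (k + 1), if l ≤ j then h j else 0 := by
  rw [← sum_filter]
  congr 1
  ext j
  simp only [mem_Icc, mem_filter, mem_range]
  omega

lemma Summable.sum_range_eq_neg_tsum_nat_add {G : Type*} [AddCommGroup G] [TopologicalSpace G]
    [IsTopologicalAddGroup G] [T2Space G] {g : ℕ → G} (hg : Summable g) (h0 : ∑' n, g n = 0)
    (k : ℕ) : ∑ i ∈ range k, g i = -∑' n, g (n + k) :=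
  eq_neg_of_add_eq_zero_left (h0 ▸ hg.sum_add_tsum_nat_add k)

section Tail

variable {g : ℕ → ℝ} {x ρ B : ℝ} {k : ℕ}

lemma Gamma_mul_abs_le_div_two_pow (hx : 1 ≤ x) (hρx : 2 ≤ ρ * x) (hB : 0 ≤ B)
    (hg : ∀ n : ℕ, |g (n + k)| ≤ B / ρ ^ (n + k) / Gamma (x + n)) (n : ℕ) :
    Gamma x * |g (n + k)| ≤ B / ρ ^ k / 2 ^ n := by
  have hρ : 0 < ρ := pos_of_mul_pos_left (by linarith) (by linarith : (0 : ℝ) ≤ x)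
  calc Gamma x * |g (n + k)| ≤ Gamma x * (B / ρ ^ (n + k) / Gamma (x + n)) :=
        mul_le_mul_of_nonneg_left (hg n) (Gamma_pos_of_pos (by linarith)).le
    _ ≤ Gamma x * (B / ρ ^ (n + k) / (Gamma x * x ^ n)) := by
        gcongr
        exact Real.Gamma_mul_pow_le_Gamma_add_nat hx n
    _ = B / ρ ^ k / (ρ * x) ^ n := by
        have : Gamma x ≠ 0 := (Gamma_pos_of_pos (by linarith)).ne'
        field_simp
        ring
    _ ≤ B / ρ ^ k / 2 ^ n := by gcongr

lemma summable_of_abs_le_div_Gamma (hx : 1 ≤ x) (hρx : 2 ≤ ρ * x) (hB : 0 ≤ B)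
    (hg : ∀ n : ℕ, |g (n + k)| ≤ B / ρ ^ (n + k) / Gamma (x + n)) : Summable g := by
  have hΓ : Gamma x ≠ 0 := (Gamma_pos_of_pos (by linarith)).ne'
  rw [← summable_nat_add_iff k, ← summable_mul_left_iff hΓ]
  refine (summable_geometric_two' (2 * (B / ρ ^ k))).of_norm_bounded fun n => ?_
  rw [norm_mul, norm_of_nonneg (Gamma_pos_of_pos (by linarith)).le, Real.norm_eq_abs,
    mul_div_cancel_left₀ _ two_ne_zero]
  exact Gamma_mul_abs_le_div_two_pow hx hρx hB hg n

lemma Gamma_mul_abs_tsum_tail_le (hx : 1 ≤ x) (hρx : 2 ≤ ρ * x) (hB : 0 ≤ B)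
    (hg : ∀ n : ℕ, |g (n + k)| ≤ B / ρ ^ (n + k) / Gamma (x + n)) :
    Gamma x * |∑' n, g (n + (k + 1))| ≤ B / ρ ^ k := by
  have hΓ : 0 ≤ Gamma x := (Gamma_pos_of_pos (by linarith)).le
  rw [← abs_of_nonneg hΓ, ← abs_mul, ← tsum_mul_left, ← Real.norm_eq_abs]
  refine tsum_of_norm_bounded (hasSum_geometric_two' (B / ρ ^ k)) fun n => ?_
  rw [Real.norm_eq_abs, abs_mul, abs_of_nonneg hΓ, show n + (k + 1) = n + 1 + k by omega, div_div,
    ← pow_succ']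
  exact Gamma_mul_abs_le_div_two_pow hx hρx hB hg (n + 1)

end Tail

lemma summable_abs_mul_pow_of_abs_le_div_pow {m : ℕ → ℝ} {C ρ x : ℝ} {k₀ : ℕ}
    (hm : ∀ k, k₀ ≤ k → |m k| ≤ C / ρ ^ k) (hx : |x| < ρ) :
    Summable fun k => |m k * x ^ k| := by
  have hρ : 0 < ρ := (abs_nonneg x).trans_lt hx
  refine ((summable_geometric_of_lt_one (by positivity) ((div_lt_one hρ).2 hx)).mul_left C
    ).of_norm_bounded_eventually_nat ?_
  filter_upwards [eventually_ge_atTop k₀] with k hk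
  rw [norm_abs_eq_norm, norm_mul, norm_pow, Real.norm_eq_abs, Real.norm_eq_abs, div_pow,
    ← mul_div_assoc, mul_div_right_comm]
  gcongr
  exact hm k hk

theorem stmt1_general (a : ℝ) (B ρ : ℝ) (hB : 0 < B) (hρ : 0 < ρ)
    (f : ℕ → ℝ) (hf : ∀ j, 2 ≤ j → |f j| ≤ B / ρ ^ j)
    (m : ℕ → ℝ)
    (hm : ∀ k, m k = (-1 : ℝ) ^ k * Real.Gamma ((k : ℝ) + a) *
      ∑ j ∈ Finset.Icc 2 k, (-1 : ℝ) ^ j * f j / Real.Gamma ((j : ℝ) + a))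
    (hS : (∑' j : ℕ, if 2 ≤ j then (-1 : ℝ) ^ j * f j / Real.Gamma ((j : ℝ) + a) else 0) = 0) :
    (∃ C > (0 : ℝ), ∃ k₀ : ℕ, ∀ k, k₀ ≤ k → |m k| ≤ C / ρ ^ k) ∧
    ∀ x : ℝ, |x| < ρ → Summable (fun k : ℕ => |m k * x ^ k|) := by
  set g : ℕ → ℝ := fun j => if 2 ≤ j then (-1 : ℝ) ^ j * f j / Gamma ((j : ℝ) + a) else 0
  have hg : ∀ j, |g j| ≤ B / ρ ^ j / |Gamma ((j : ℝ) + a)| := by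
    intro j
    by_cases hj : 2 ≤ j
    · simp only [g, if_pos hj, abs_div, abs_mul, abs_pow, abs_neg, abs_one, one_pow, one_mul]
      gcongr
      exact hf j hj
    · simp only [g, if_neg hj, abs_zero]
      positivity
  obtain ⟨k₀, hk₀⟩ : ∃ k₀ : ℕ, ∀ k, k₀ ≤ k → 1 ≤ (k : ℝ) + a ∧ 2 ≤ ρ * ((k : ℝ) + a) := by
    have hlim : Tendsto (fun k : ℕ => (k : ℝ) + a) atTop atTop :=
      tendsto_atTop_add_const_right _ a tendsto_natCast_atTop_atTop
    exact eventually_atTop.1 ((hlim.eventually_ge_atTop 1).and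
      ((hlim.const_mul_atTop hρ).eventually_ge_atTop 2))
  have htail : ∀ k, k₀ ≤ k → ∀ n : ℕ,
      |g (n + k)| ≤ B / ρ ^ (n + k) / Gamma (((k : ℝ) + a) + n) := by
    intro k hk n
    have hpos : 0 < Gamma (((k : ℝ) + a) + n) :=
      Gamma_pos_of_pos (by linarith [(hk₀ k hk).1, (n.cast_nonneg : (0 : ℝ) ≤ n)])
    have h := hg (n + k)
    rwa [Nat.cast_add, show (n : ℝ) + k + a = k + a + n by ring, abs_of_pos hpos] at h
  have hsum : Summable g :=
    summable_of_abs_le_div_Gamma (hk₀ k₀ le_rfl).1 (hk₀ k₀ le_rfl).2 hB.le (htail k₀ le_rfl)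
  have hmk : ∀ k, k₀ ≤ k → |m k| ≤ B / ρ ^ k := by
    intro k hk
    have hΓ : 0 < Gamma ((k : ℝ) + a) := Gamma_pos_of_pos (by linarith [(hk₀ k hk).1])
    rw [hm k, sum_Icc_eq_sum_range_ite, hsum.sum_range_eq_neg_tsum_nat_add hS, abs_mul, abs_mul,
      abs_pow, abs_neg, abs_one, one_pow, one_mul, abs_of_pos hΓ, abs_neg]
    exact Gamma_mul_abs_tsum_tail_le (hk₀ k hk).1 (hk₀ k hk).2 hB.le (htail k hk)
  exact ⟨⟨B, hB, k₀, hmk⟩, fun x hx => summable_abs_mul_pow_of_abs_le_div_pow hmk hx⟩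

/-- If `a > -2`, `|f_j| ≤ B ρ^{-j}` and `S_∞ = Σ_{j≥2} (-1)^j f_j/Γ(j+a) = 0`, then the
coefficients `m_k = (-1)^k Γ(k+a) S_k` are eventually bounded by `C ρ^{-k}` and the
power series `Σ m_k x^k` converges absolutely for `|x| < ρ`. -/
theorem stmt1 (a : ℝ) (ha : -2 < a) (B ρ : ℝ) (hB : 0 < B) (hρ : 0 < ρ)
    (f : ℕ → ℝ) (hf : ∀ j, 2 ≤ j → |f j| ≤ B / ρ ^ j)
    (m : ℕ → ℝ)
    (hm : ∀ k, m k = (-1 : ℝ) ^ k * Real.Gamma ((k : ℝ) + a) *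
      ∑ j ∈ Finset.Icc 2 k, (-1 : ℝ) ^ j * f j / Real.Gamma ((j : ℝ) + a))
    (hS : (∑' j : ℕ, if 2 ≤ j then (-1 : ℝ) ^ j * f j / Real.Gamma ((j : ℝ) + a) else 0) = 0) :
    (∃ C > (0 : ℝ), ∃ k₀ : ℕ, ∀ k, k₀ ≤ k → |m k| ≤ C / ρ ^ k) ∧
    ∀ x : ℝ, |x| < ρ → Summable (fun k : ℕ => |m k * x ^ k|) :=
  stmt1_general a B ρ hB hρ f hf m hm hS
end

section
/- Suppose a > -2, |f_j| ≤ B·ρ^{-j} for all j ≥ 2 with B, ρ > 0, and S_∞ := Σ_{j=2}^∞ (-1)^j f_j/Γ(j+a) ≠ 0. Then the power series Σ_{k=2}^∞ m_k x^k, where m_k = (-1)^k Γ(k+a) Σ_{j=2}^k (-1)^j f_j/Γ(j+a), diverges for every x ≠ 0 (i.e. m_k x^k does not tend to 0). -/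
/-!
Since `S_∞ ≠ 0` the series defining it is summable, so `|S_k| → |S_∞| > 0`. Meanwhile
`Γ(k + a) |x|^k → ∞`, because the ratio of consecutive terms is `(k + a) |x| → ∞`. Hence
`|m_k x^k| = Γ(k + a) |x|^k |S_k| → ∞` for every `x ≠ 0`.
-/

open Filter Finset Topology

theorem tendsto_atTop_of_ratio_tendsto_atTop {u : ℕ → ℝ} (hpos : ∀ᶠ k in atTop, 0 < u k)
    (hratio : Tendsto (fun k => u (k + 1) / u k) atTop atTop) : Tendsto u atTop atTop := by
  have hinv_ratio : Tendsto (fun k => ‖(u (k + 1))⁻¹‖ / ‖(u k)⁻¹‖) atTop (𝓝 0) := by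
    refine tendsto_inv_atTop_zero.comp hratio |>.congr' ?_
    filter_upwards [hpos, (tendsto_add_atTop_nat 1).eventually hpos] with k hk hk1
    rw [Function.comp_apply, norm_inv, norm_inv, Real.norm_of_nonneg hk.le,
      Real.norm_of_nonneg hk1.le, inv_div, inv_div_inv]
  have hsum : Summable u⁻¹ := summable_of_ratio_test_tendsto_lt_one zero_lt_one
    (hpos.mono fun k hk => inv_ne_zero hk.ne') hinv_ratio
  exact inv_inv u ▸ (tendsto_nhdsWithin_of_tendsto_nhds_of_eventually_within _
    hsum.tendsto_atTop_zero (hpos.mono fun k hk => inv_pos.2 hk)).inv_tendsto_nhdsGT_zero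

theorem eventually_natCast_add_pos (a : ℝ) : ∀ᶠ k : ℕ in atTop, 0 < (k : ℝ) + a :=
  (tendsto_atTop_add_const_right _ a tendsto_natCast_atTop_atTop).eventually_gt_atTop 0

theorem tendsto_Gamma_natCast_add_mul_pow_atTop (a : ℝ) {r : ℝ} (hr : 0 < r) :
    Tendsto (fun k : ℕ => Real.Gamma (k + a) * r ^ k) atTop atTop := by
  refine tendsto_atTop_of_ratio_tendsto_atTop ?_ ?_
  · filter_upwards [eventually_natCast_add_pos a] with k hk
    exact mul_pos (Real.Gamma_pos_of_pos hk) (pow_pos hr k)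
  · refine (tendsto_atTop_add_const_right _ a tendsto_natCast_atTop_atTop).atTop_mul_const hr
      |>.congr' ?_
    filter_upwards [eventually_natCast_add_pos a] with k hk
    have hΓ := Real.Gamma_pos_of_pos hk
    rw [Nat.cast_succ, add_right_comm, Real.Gamma_add_one hk.ne', pow_succ]
    field_simp

theorem tendsto_sum_Icc_tsum {M : Type*} [AddCommMonoid M] [TopologicalSpace M] {g : ℕ → M}
    (n : ℕ) (hg : Summable fun j => if n ≤ j then g j else 0) :
    Tendsto (fun k => ∑ j ∈ Icc n k, g j) atTop (𝓝 (∑' j, if n ≤ j then g j else 0)) := by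
  refine (hg.hasSum.tendsto_sum_nat.comp (tendsto_add_atTop_nat 1)).congr fun k => ?_
  rw [Function.comp_apply, ← sum_filter]
  congr 1
  ext j
  simp only [mem_filter, mem_range, mem_Icc]
  omega

theorem stmt2_general (a : ℝ)
    (f : ℕ → ℝ)
    (m : ℕ → ℝ)
    (hm : ∀ k, m k = (-1 : ℝ) ^ k * Real.Gamma ((k : ℝ) + a) *
      ∑ j ∈ Finset.Icc 2 k, (-1 : ℝ) ^ j * f j / Real.Gamma ((j : ℝ) + a))
    (hS : (∑' j : ℕ, if 2 ≤ j then (-1 : ℝ) ^ j * f j / Real.Gamma ((j : ℝ) + a) else 0) ≠ 0) :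
    ∀ x : ℝ, x ≠ 0 →
      ¬ Filter.Tendsto (fun k : ℕ => m k * x ^ k) Filter.atTop (nhds 0) := by
  intro x hx hm_zero
  -- a non-summable `tsum` would be the junk value `0`
  have hpartial := (tendsto_sum_Icc_tsum 2
    (by_contra fun h => hS (tsum_eq_zero_of_not_summable h))).abs
  have hinfty : Tendsto (fun k => |m k * x ^ k|) atTop atTop := by
    refine (tendsto_Gamma_natCast_add_mul_pow_atTop a (abs_pos.2 hx)).atTop_mul_pos
      (abs_pos.2 hS) hpartial |>.congr' ?_
    filter_upwards [eventually_natCast_add_pos a] with k hk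
    rw [hm, abs_mul, abs_mul, abs_mul, abs_pow, abs_neg, abs_one, one_pow, one_mul,
      abs_of_pos (Real.Gamma_pos_of_pos hk), abs_pow]
    ring
  exact not_tendsto_nhds_of_tendsto_atTop hinfty 0 (by simpa using hm_zero.abs)

/-- If `a > -2`, `|f_j| ≤ B ρ^{-j}` and `S_∞ = Σ_{j≥2} (-1)^j f_j/Γ(j+a) ≠ 0`, then
`Σ m_k x^k` with `m_k = (-1)^k Γ(k+a) S_k` diverges for every `x ≠ 0`:
`m_k x^k` does not tend to `0`. -/
theorem stmt2 (a : ℝ) (ha : -2 < a) (B ρ : ℝ) (hB : 0 < B) (hρ : 0 < ρ)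
    (f : ℕ → ℝ) (hf : ∀ j, 2 ≤ j → |f j| ≤ B / ρ ^ j)
    (m : ℕ → ℝ)
    (hm : ∀ k, m k = (-1 : ℝ) ^ k * Real.Gamma ((k : ℝ) + a) *
      ∑ j ∈ Finset.Icc 2 k, (-1 : ℝ) ^ j * f j / Real.Gamma ((j : ℝ) + a))
    (hS : (∑' j : ℕ, if 2 ≤ j then (-1 : ℝ) ^ j * f j / Real.Gamma ((j : ℝ) + a) else 0) ≠ 0) :
    ∀ x : ℝ, x ≠ 0 →
      ¬ Filter.Tendsto (fun k : ℕ => m k * x ^ k) Filter.atTop (nhds 0) :=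
  stmt2_general a f m hm hS
end

section
/- For every real a > -2 there exists a constant C > 0 such that for all integers k ≥ 4, Σ_{j=2}^{k-2} Γ(j+a)·Γ(k-j+a) ≤ C·Γ(k-2+a). -/
/-!
Put `b = a + 2`, `m = j - 2`, `n = k - j - 2`; the terms become `Γ(b+m) Γ(b+n)` and the right side
`Γ(b+m+n)`. Since `Γ(y+1)/Γ(s+1) = (y/s) Γ(y)/Γ(s)`, the ratio `Γ(y+n)/Γ(s+n)` decreases in `n`
when `y ≤ s`, so for `m ≤ n` the term is at most `Γ(b+m)²/Γ(b+2m) · Γ(b+m+n)`. The diagonal factor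
`Γ(b+m)²/Γ(b+2m)` decays geometrically with ratio `(b+1)/(b+2)`, and summing the geometric series
from both ends of the range gives `C = 2(b+2) Γ(b)`.
-/

open Real Finset

theorem Gamma_add_nat_div_Gamma_add_nat_le {y s : ℝ} (hy : 0 < y) (hys : y ≤ s) (n : ℕ) :
    Gamma (y + n) / Gamma (s + n) ≤ Gamma y / Gamma s := by
  induction n with
  | zero => simp
  | succ n ih =>
    have hyn : 0 < y + n := by positivity
    have hsn : 0 < s + n := by linarith
    have hstep : y + n ≤ s + n := by linarith
    calc Gamma (y + ↑(n + 1)) / Gamma (s + ↑(n + 1))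
        = (y + n) / (s + n) * (Gamma (y + n) / Gamma (s + n)) := by
          rw [Nat.cast_succ, ← add_assoc, ← add_assoc, Gamma_add_one hyn.ne',
            Gamma_add_one hsn.ne', mul_div_mul_comm]
      _ ≤ 1 * (Gamma (y + n) / Gamma (s + n)) := by
          gcongr
          exact (div_le_one hsn).mpr hstep
      _ ≤ Gamma y / Gamma s := by rw [one_mul]; exact ih

theorem Gamma_sq_div_Gamma_add_two_mul_le {b : ℝ} (hb : 0 < b) (m : ℕ) :
    Gamma (b + m) ^ 2 / Gamma (b + 2 * m) ≤ ((b + 1) / (b + 2)) ^ m * Gamma b := by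
  induction m with
  | zero => simp [sq, (Gamma_pos_of_pos hb).ne']
  | succ m ih =>
    have h1 : 0 < b + m := by positivity
    have h2 : 0 < b + 2 * m := by positivity
    have h3 : 0 < b + 2 * m + 1 := by positivity
    have hratio : (b + m) ^ 2 / ((b + 2 * m + 1) * (b + 2 * m)) ≤ (b + 1) / (b + 2) := by
      rw [div_le_div_iff₀ (by positivity) (by positivity)]
      nlinarith [mul_nonneg hb.le (Nat.cast_nonneg (α := ℝ) m),
        mul_nonneg (mul_nonneg hb.le hb.le) (Nat.cast_nonneg (α := ℝ) m)]
    calc Gamma (b + ↑(m + 1)) ^ 2 / Gamma (b + 2 * ↑(m + 1))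
        = (b + m) ^ 2 / ((b + 2 * m + 1) * (b + 2 * m)) *
            (Gamma (b + m) ^ 2 / Gamma (b + 2 * m)) := by
          rw [show b + 2 * ((m + 1 : ℕ) : ℝ) = b + 2 * m + 1 + 1 by push_cast; ring,
            Nat.cast_succ, ← add_assoc, Gamma_add_one h1.ne', Gamma_add_one h3.ne',
            Gamma_add_one h2.ne']
          field_simp
      _ ≤ (b + 1) / (b + 2) * (((b + 1) / (b + 2)) ^ m * Gamma b) := by
          gcongr
      _ = ((b + 1) / (b + 2)) ^ (m + 1) * Gamma b := by ring

theorem Gamma_mul_Gamma_le_of_le {b : ℝ} (hb : 0 < b) {m n : ℕ} (hmn : m ≤ n) :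
    Gamma (b + m) * Gamma (b + n) ≤ ((b + 1) / (b + 2)) ^ m * Gamma b * Gamma (b + (m + n)) := by
  have hshift : Gamma (b + n) / Gamma (b + (m + n)) ≤ Gamma (b + m) / Gamma (b + 2 * m) := by
    have := Gamma_add_nat_div_Gamma_add_nat_le (y := b + m) (s := b + 2 * m) (by positivity)
      (by linarith [(Nat.cast_nonneg m : (0 : ℝ) ≤ m)]) (n - m)
    rwa [Nat.cast_sub hmn, show b + m + (n - m : ℝ) = b + n by ring,
      show b + 2 * m + (n - m : ℝ) = b + (m + n) by ring] at this
  have hGm : 0 < Gamma (b + m) := Gamma_pos_of_pos (by positivity)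
  have hGmn : 0 < Gamma (b + (m + n)) := Gamma_pos_of_pos (by positivity)
  calc Gamma (b + m) * Gamma (b + n)
      = Gamma (b + m) * (Gamma (b + n) / Gamma (b + (m + n))) * Gamma (b + (m + n)) := by
        field_simp
    _ ≤ Gamma (b + m) * (Gamma (b + m) / Gamma (b + 2 * m)) * Gamma (b + (m + n)) := by
        gcongr
    _ = Gamma (b + m) ^ 2 / Gamma (b + 2 * m) * Gamma (b + (m + n)) := by ring
    _ ≤ ((b + 1) / (b + 2)) ^ m * Gamma b * Gamma (b + (m + n)) := by
        gcongr
        exact Gamma_sq_div_Gamma_add_two_mul_le hb m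

theorem Gamma_mul_Gamma_le {b : ℝ} (hb : 0 < b) (m n : ℕ) :
    Gamma (b + m) * Gamma (b + n) ≤
      (((b + 1) / (b + 2)) ^ m + ((b + 1) / (b + 2)) ^ n) * Gamma b * Gamma (b + (m + n : ℕ)) := by
  push_cast
  have hr : 0 ≤ (b + 1) / (b + 2) := by positivity
  have hG : 0 ≤ Gamma b * Gamma (b + (m + n)) := by positivity
  rcases le_total m n with hmn | hnm
  · calc Gamma (b + m) * Gamma (b + n)
        ≤ ((b + 1) / (b + 2)) ^ m * Gamma b * Gamma (b + (m + n)) :=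
          Gamma_mul_Gamma_le_of_le hb hmn
      _ ≤ _ := by rw [add_mul, add_mul]; nlinarith [pow_nonneg hr n]
  · calc Gamma (b + m) * Gamma (b + n)
        ≤ ((b + 1) / (b + 2)) ^ n * Gamma b * Gamma (b + (n + m)) := by
          rw [mul_comm]; exact Gamma_mul_Gamma_le_of_le hb hnm
      _ ≤ _ := by rw [add_comm (n : ℝ), add_mul, add_mul]; nlinarith [pow_nonneg hr m]

theorem sum_range_Gamma_mul_Gamma_sub_le {b : ℝ} (hb : 0 < b) (N : ℕ) :
    ∑ m ∈ range (N + 1), Gamma (b + m) * Gamma (b + (N - m : ℕ)) ≤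
      2 * (b + 2) * Gamma b * Gamma (b + N) := by
  set r := (b + 1) / (b + 2)
  have hr0 : 0 ≤ r := by positivity
  have hr1 : r < 1 := (div_lt_one (by positivity)).mpr (by linarith)
  have hgeom : ∑ m ∈ range (N + 1), r ^ m ≤ b + 2 := by
    have := geom_sum_Ico_le_of_lt_one (m := 0) (n := N + 1) hr0 hr1
    rwa [← range_eq_Ico, pow_zero, show 1 / (1 - r) = b + 2 by simp only [r]; field_simp; ring]
      at this
  calc ∑ m ∈ range (N + 1), Gamma (b + m) * Gamma (b + (N - m : ℕ))
      ≤ ∑ m ∈ range (N + 1), (r ^ m + r ^ (N - m)) * Gamma b * Gamma (b + N) := by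
        refine sum_le_sum fun m hm => ?_
        have hmN : m + (N - m) = N := Nat.add_sub_cancel' (Nat.lt_succ_iff.mp (mem_range.mp hm))
        simpa only [hmN] using Gamma_mul_Gamma_le hb m (N - m)
    _ = 2 * (∑ m ∈ range (N + 1), r ^ m) * Gamma b * Gamma (b + N) := by
        have hreflect := sum_range_reflect (fun m => r ^ m) (N + 1)
        rw [Nat.add_sub_cancel] at hreflect
        rw [← sum_mul, ← sum_mul, sum_add_distrib, hreflect]
        ring
    _ ≤ 2 * (b + 2) * Gamma b * Gamma (b + N) := by gcongr

/-- Convolution estimate: for every `a > -2` there is a `C > 0` such that for all `k ≥ 4`,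
`Σ_{j=2}^{k-2} Γ(j+a)Γ(k-j+a) ≤ C Γ(k-2+a)`. -/
theorem stmt4 (a : ℝ) (ha : -2 < a) :
    ∃ C > (0 : ℝ), ∀ k : ℕ, 4 ≤ k →
      ∑ j ∈ Finset.Icc 2 (k - 2),
        Real.Gamma ((j : ℝ) + a) * Real.Gamma ((k : ℝ) - (j : ℝ) + a)
      ≤ C * Real.Gamma ((k : ℝ) - 2 + a) := by
  have hb : 0 < 2 + a := by linarith
  refine ⟨2 * (2 + a + 2) * Gamma (2 + a), by positivity, fun k hk => ?_⟩
  obtain ⟨N, rfl⟩ := Nat.exists_eq_add_of_le' hk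
  have hreindex : ∑ j ∈ Icc 2 (N + 4 - 2), Gamma (j + a) * Gamma (↑(N + 4) - j + a) =
      ∑ m ∈ range (N + 1), Gamma (2 + a + m) * Gamma (2 + a + (N - m : ℕ)) := by
    rw [show N + 4 - 2 = N + 2 by omega, ← Finset.Ico_add_one_right_eq_Icc, sum_Ico_eq_sum_range]
    refine sum_congr rfl fun m hm => ?_
    rw [Nat.cast_sub (Nat.lt_succ_iff.mp (mem_range.mp hm))]
    push_cast
    ring_nf
  rw [hreindex, show ((N + 4 : ℕ) : ℝ) - 2 + a = 2 + a + N by push_cast; ring]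
  exact sum_range_Gamma_mul_Gamma_sub_le hb N
end

section
/- For every real a > -2 and every ξ > 0 there exists a constant C > 0 such that for all integers k ≥ 4, Σ_{l=2}^{⌊k/2⌋} ξ^{l-2}·Γ(k-2(l-1)+a) ≤ C·Γ(k-2+a). -/
/-!
Put `s = 2 + a > 0`. Since `Γ(x + 1) = x Γ(x)` and `x ≤ y + x` for `y ≥ 0`, induction on `n` gives
`Γ(y + s) Γ(n + s) ≤ Γ(y + n + s) Γ(s)`. With `n = 2j` this bounds the `j`-th term of the sum
(`j = l - 2`) by `ξ^j Γ(s) / Γ(2j + s) · Γ(k - 2 + a)`, and `∑ ξ^j / Γ(2j + s)` converges by the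
ratio test, so its sum times `Γ(s)` is a valid constant.
-/

open Filter Finset

namespace Real

theorem Gamma_mul_Gamma_natCast_add_le {s y : ℝ} (hs : 0 < s) (hy : 0 ≤ y) (n : ℕ) :
    Gamma (y + s) * Gamma (n + s) ≤ Gamma (y + n + s) * Gamma s := by
  induction n with
  | zero => simp
  | succ n ih =>
    have hns : 0 < (n : ℝ) + s := by positivity
    have hyns : 0 < y + n + s := by positivity
    have hstep : Gamma ((n : ℝ) + 1 + s) = (n + s) * Gamma (n + s) := by
      rw [add_right_comm, Gamma_add_one hns.ne']
    have hstep' : Gamma (y + (n + 1 : ℝ) + s) = (y + n + s) * Gamma (y + n + s) := by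
      rw [← add_assoc, add_right_comm _ (1 : ℝ), Gamma_add_one hyns.ne']
    push_cast
    rw [hstep, hstep']
    have hΓ : 0 ≤ Gamma (y + n + s) * Gamma s :=
      (mul_pos (Gamma_pos_of_pos hyns) (Gamma_pos_of_pos hs)).le
    calc Gamma (y + s) * ((n + s) * Gamma (n + s))
        = (n + s) * (Gamma (y + s) * Gamma (n + s)) := by ring
      _ ≤ (n + s) * (Gamma (y + n + s) * Gamma s) := by gcongr
      _ ≤ (y + n + s) * (Gamma (y + n + s) * Gamma s) := by gcongr; linarith
      _ = (y + n + s) * Gamma (y + n + s) * Gamma s := by ring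

theorem Gamma_sub_two_mul_add_le {s m : ℝ} (hs : 0 < s) {j : ℕ} (hj : 2 * (j : ℝ) ≤ m) :
    Gamma (m - 2 * j + s) ≤ Gamma s / Gamma (2 * j + s) * Gamma (m + s) := by
  have hΓ : 0 < Gamma (2 * j + s) := Gamma_pos_of_pos (by positivity)
  have key := Gamma_mul_Gamma_natCast_add_le hs (sub_nonneg.2 hj) (2 * j)
  push_cast at key
  rw [sub_add_cancel] at key
  rw [div_mul_eq_mul_div, le_div_iff₀ hΓ]
  linarith

theorem Gamma_two_mul_natCast_add_two_add {s : ℝ} (hs : 0 < s) (j : ℕ) :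
    Gamma (2 * ((j + 1 : ℕ) : ℝ) + s) = (2 * j + s + 1) * (2 * j + s) * Gamma (2 * j + s) := by
  have h₀ : 0 < 2 * (j : ℝ) + s := by positivity
  push_cast
  rw [show 2 * ((j : ℝ) + 1) + s = (2 * j + s + 1) + 1 by ring,
    Gamma_add_one (by positivity), Gamma_add_one h₀.ne', mul_assoc]

theorem summable_pow_div_Gamma_two_mul_add {ξ s : ℝ} (hξ : ξ ≠ 0) (hs : 0 < s) :
    Summable fun j : ℕ => ξ ^ j / Gamma (2 * j + s) := by
  have hΓ (j : ℕ) : 0 < Gamma (2 * j + s) := Gamma_pos_of_pos (by positivity)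
  have hratio (j : ℕ) :
      ‖ξ ^ (j + 1) / Gamma (2 * ((j + 1 : ℕ) : ℝ) + s)‖ / ‖ξ ^ j / Gamma (2 * j + s)‖
        = |ξ| / ((2 * j + s + 1) * (2 * j + s)) := by
    have h₀ : 0 < 2 * (j : ℝ) + s := by positivity
    rw [Gamma_two_mul_natCast_add_two_add hs]
    simp only [norm_div, norm_mul, norm_pow, Real.norm_eq_abs, abs_of_pos (hΓ j), abs_of_pos h₀,
      abs_of_pos (show 0 < 2 * (j : ℝ) + s + 1 by positivity)]
    field_simp
    ring
  have hlin : Tendsto (fun j : ℕ => 2 * (j : ℝ) + s) atTop atTop :=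
    tendsto_atTop_add_const_right _ s
      (tendsto_natCast_atTop_atTop.const_mul_atTop two_pos)
  refine summable_of_ratio_test_tendsto_lt_one zero_lt_one
    (Eventually.of_forall fun j => div_ne_zero (pow_ne_zero j hξ) (hΓ j).ne') ?_
  simp only [hratio]
  exact tendsto_const_nhds.div_atTop
    ((tendsto_atTop_add_const_right _ 1 hlin).atTop_mul_atTop₀ hlin)

end Real

open Real in
theorem sum_range_pow_mul_Gamma_sub_two_mul_le {ξ s : ℝ} (hξ : 0 < ξ) (hs : 0 < s) (m : ℕ) :
    ∑ j ∈ range (m / 2 + 1), ξ ^ j * Gamma (m - 2 * j + s)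
      ≤ (Gamma s * ∑' j : ℕ, ξ ^ j / Gamma (2 * j + s)) * Gamma (m + s) := by
  have hΓ (j : ℕ) : 0 < Gamma (2 * j + s) := Gamma_pos_of_pos (by positivity)
  calc ∑ j ∈ range (m / 2 + 1), ξ ^ j * Gamma (m - 2 * j + s)
      ≤ ∑ j ∈ range (m / 2 + 1), ξ ^ j * (Gamma s / Gamma (2 * j + s) * Gamma (m + s)) := by
        gcongr with j hj
        refine Gamma_sub_two_mul_add_le hs ?_
        have : 2 * j ≤ m := by have := mem_range.1 hj; omega
        exact_mod_cast this
    _ = (Gamma s * ∑ j ∈ range (m / 2 + 1), ξ ^ j / Gamma (2 * j + s)) * Gamma (m + s) := by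
        rw [mul_sum, sum_mul]
        congr! 1 with j
        ring
    _ ≤ (Gamma s * ∑' j : ℕ, ξ ^ j / Gamma (2 * j + s)) * Gamma (m + s) := by
        have := Gamma_pos_of_pos hs
        have := Gamma_pos_of_pos (show 0 < (m : ℝ) + s by positivity)
        gcongr
        exact (summable_pow_div_Gamma_two_mul_add hξ.ne' hs).sum_le_tsum _
          fun j _ => (div_pos (pow_pos hξ j) (hΓ j)).le

/-- For every `a > -2` and `ξ > 0` there is a `C > 0` such that for all `k ≥ 4`,
`Σ_{l=2}^{⌊k/2⌋} ξ^{l-2} Γ(k-2(l-1)+a) ≤ C Γ(k-2+a)`. -/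
theorem stmt6 (a : ℝ) (ha : -2 < a) (ξ : ℝ) (hξ : 0 < ξ) :
    ∃ C > (0 : ℝ), ∀ k : ℕ, 4 ≤ k →
      ∑ l ∈ Finset.Icc 2 (k / 2),
        ξ ^ (l - 2) * Real.Gamma ((k : ℝ) - 2 * ((l : ℝ) - 1) + a)
      ≤ C * Real.Gamma ((k : ℝ) - 2 + a) := by
  have hs : 0 < 2 + a := by linarith
  have hsum := Real.summable_pow_div_Gamma_two_mul_add hξ.ne' hs
  have hterm_pos (j : ℕ) : 0 < ξ ^ j / Real.Gamma (2 * j + (2 + a)) :=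
    div_pos (pow_pos hξ j) (Real.Gamma_pos_of_pos (by positivity))
  refine ⟨_, mul_pos (Real.Gamma_pos_of_pos hs)
    (hsum.tsum_pos (fun j => (hterm_pos j).le) 0 (hterm_pos 0)), fun k hk => ?_⟩
  have hreindex : ∑ l ∈ Icc 2 (k / 2), ξ ^ (l - 2) * Real.Gamma ((k : ℝ) - 2 * ((l : ℝ) - 1) + a)
      = ∑ j ∈ range ((k - 4) / 2 + 1),
          ξ ^ j * Real.Gamma (((k - 4 : ℕ) : ℝ) - 2 * j + (2 + a)) := by
    rw [← Ico_add_one_right_eq_Icc, sum_Ico_eq_sum_range,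
      show k / 2 + 1 - 2 = (k - 4) / 2 + 1 by omega]
    refine sum_congr rfl fun j _ => ?_
    push_cast [Nat.cast_sub hk, Nat.add_sub_cancel_left]
    ring_nf
  rw [hreindex]
  convert sum_range_pow_mul_Gamma_sub_two_mul_le hξ hs (k - 4) using 3
  push_cast [Nat.cast_sub hk]
  ring
end

section
/- Let a > -2 and define the weighted sup norm ‖y‖ = sup_{k≥2} |y_k|/Γ(k+a) on formal power series y = Σ_{k≥2} y_k x^k with finite norm. If G and H are two such series with finite norm, then their Cauchy product GH = Σ_{k≥4} (Σ_{j=2}^{k-2} G_j H_{k-j}) x^k satisfies |(GH)_k| ≤ C·‖G‖·‖H‖·Γ(k-2+a) for all k ≥ 4, where C depends only on a; consequently GH also has finite norm. -/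
/-!
Since `Γ(x + 1) Γ(y) = (x / y) Γ(x) Γ(y + 1)`, a product `Γ(j + a) Γ(k - j + a)` grows as `j`
moves away from `k / 2`. So for `3 ≤ j ≤ k - 3` it is at most `Γ(3 + a) Γ(k - 3 + a)`, and these
`k - 5` terms add up to at most `(k - 3 + a) Γ(3 + a) Γ(k - 3 + a) = Γ(3 + a) Γ(k - 2 + a)`; the
terms `j = 2` and `j = k - 2` are both `Γ(2 + a) Γ(k - 2 + a)`. Finite norm then follows from
`(2 + a) (3 + a) Γ(k - 2 + a) ≤ Γ(k + a)`.
-/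

open Finset Real

theorem abs_sum_Icc_mul_le {G H w : ℕ → ℝ} {NG NH : ℝ}
    (hG : ∀ k, 2 ≤ k → |G k| ≤ NG * w k) (hH : ∀ k, 2 ≤ k → |H k| ≤ NH * w k) (k : ℕ) :
    |∑ j ∈ Icc 2 (k - 2), G j * H (k - j)|
      ≤ NG * NH * ∑ j ∈ Icc 2 (k - 2), w j * w (k - j) := by
  rw [mul_sum]
  refine (abs_sum_le_sum_abs _ _).trans (sum_le_sum fun j hj => ?_)
  rw [mem_Icc] at hj
  have hGj := hG j hj.1
  calc |G j * H (k - j)| = |G j| * |H (k - j)| := abs_mul _ _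
    _ ≤ (NG * w j) * (NH * w (k - j)) :=
        mul_le_mul hGj (hH _ (by omega)) (abs_nonneg _) ((abs_nonneg _).trans hGj)
    _ = NG * NH * (w j * w (k - j)) := by ring

namespace Real

theorem Gamma_add_one_mul_Gamma_le {x y : ℝ} (hx : 0 < x) (hxy : x ≤ y) :
    Gamma (x + 1) * Gamma y ≤ Gamma x * Gamma (y + 1) := by
  have hΓ : 0 ≤ Gamma x * Gamma y :=
    (mul_pos (Gamma_pos_of_pos hx) (Gamma_pos_of_pos (hx.trans_le hxy))).le
  rw [Gamma_add_one hx.ne', Gamma_add_one (hx.trans_le hxy).ne']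
  calc x * Gamma x * Gamma y = x * (Gamma x * Gamma y) := by ring
    _ ≤ y * (Gamma x * Gamma y) := mul_le_mul_of_nonneg_right hxy hΓ
    _ = Gamma x * (y * Gamma y) := by ring

theorem Gamma_mul_Gamma_le_of_le {b : ℝ} {m i j : ℕ} (hb : 0 < m + b) (hi : m ≤ i)
    (hj : m ≤ j) :
    Gamma (i + b) * Gamma (j + b) ≤ Gamma (m + b) * Gamma ((i + j - m : ℕ) + b) := by
  wlog hij : i ≤ j generalizing i j
  · rw [mul_comm, add_comm i j]
    exact this hj hi (by omega)
  induction i, hi using Nat.le_induction generalizing j with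
  | base => rw [Nat.add_sub_cancel_left]
  | succ i hmi ih =>
    have hib : 0 < (i : ℝ) + b := hb.trans_le (by gcongr)
    calc Gamma (↑(i + 1) + b) * Gamma (j + b)
        = Gamma ((i + b) + 1) * Gamma (j + b) := by push_cast; ring_nf
      _ ≤ Gamma (i + b) * Gamma ((j + b) + 1) :=
          Gamma_add_one_mul_Gamma_le hib (by gcongr; exact_mod_cast (by omega : i ≤ j))
      _ = Gamma (i + b) * Gamma (↑(j + 1) + b) := by push_cast; ring_nf
      _ ≤ Gamma (m + b) * Gamma (↑(i + (j + 1) - m) + b) := ih (by omega) (by omega)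
      _ = Gamma (m + b) * Gamma (↑(i + 1 + j - m) + b) := by
          rw [show i + (j + 1) = i + 1 + j by ring]

theorem Gamma_add_two_mul_Gamma_le {c x : ℝ} (hc : 0 < c) (hcx : c ≤ x) :
    c * (c + 1) * Gamma x ≤ Gamma (x + 2) := by
  have hx : 0 < x := hc.trans_le hcx
  rw [show x + 2 = (x + 1) + 1 by ring, Gamma_add_one (by linarith), Gamma_add_one hx.ne',
    ← mul_assoc]
  gcongr ?_ * _
  nlinarith

theorem sum_Ioo_Gamma_mul_Gamma_le {a : ℝ} (ha : -2 < a) {k : ℕ} (hk : 5 ≤ k) :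
    ∑ j ∈ Ioo 2 (k - 2), Gamma (j + a) * Gamma ((k - j : ℕ) + a)
      ≤ Gamma (3 + a) * Gamma (k - 2 + a) := by
  have hk' : (5 : ℝ) ≤ k := by exact_mod_cast hk
  have hΓ₃ : 0 < Gamma (3 + a) := Gamma_pos_of_pos (by linarith)
  have hterm : ∀ j ∈ Ioo 2 (k - 2), Gamma (j + a) * Gamma ((k - j : ℕ) + a)
      ≤ Gamma (3 + a) * Gamma (k - 3 + a) := by
    intro j hj
    rw [mem_Ioo] at hj
    have h := Gamma_mul_Gamma_le_of_le (b := a) (m := 3) (i := j) (j := k - j)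
      (by push_cast; linarith) hj.1 (by omega)
    rwa [show j + (k - j) - 3 = k - 3 by omega, Nat.cast_sub (by omega : 3 ≤ k),
      Nat.cast_ofNat] at h
  have hcard : ((Ioo 2 (k - 2)).card : ℝ) = k - 5 := by
    rw [Nat.card_Ioo, show k - 2 - 2 - 1 = k - 5 by omega, Nat.cast_sub hk, Nat.cast_ofNat]
  calc ∑ j ∈ Ioo 2 (k - 2), Gamma (j + a) * Gamma ((k - j : ℕ) + a)
      ≤ (Ioo 2 (k - 2)).card • (Gamma (3 + a) * Gamma (k - 3 + a)) :=
        sum_le_card_nsmul _ _ _ hterm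
    _ = Gamma (3 + a) * ((k - 5) * Gamma (k - 3 + a)) := by rw [nsmul_eq_mul, hcard]; ring
    _ ≤ Gamma (3 + a) * ((k - 3 + a) * Gamma (k - 3 + a)) := by
        have : 0 < k - 3 + a := by linarith
        gcongr
        linarith
    _ = Gamma (3 + a) * Gamma (k - 2 + a) := by
        rw [← Gamma_add_one (by linarith), show (k : ℝ) - 3 + a + 1 = k - 2 + a by ring]

theorem sum_Icc_Gamma_mul_Gamma_le {a : ℝ} (ha : -2 < a) {k : ℕ} (hk : 4 ≤ k) :
    ∑ j ∈ Icc 2 (k - 2), Gamma (j + a) * Gamma ((k - j : ℕ) + a)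
      ≤ (2 * Gamma (2 + a) + Gamma (3 + a)) * Gamma (k - 2 + a) := by
  have hΓ₂ : 0 < Gamma (2 + a) := Gamma_pos_of_pos (by linarith)
  have hΓ₃ : 0 < Gamma (3 + a) := Gamma_pos_of_pos (by linarith)
  obtain rfl | hk5 := hk.eq_or_lt
  · norm_num
    nlinarith
  · have hmiddle := sum_Ioo_Gamma_mul_Gamma_le ha hk5
    rw [← add_sum_Ioc_eq_sum_Icc (by omega), ← sum_Ioo_add_eq_sum_Ioc (by omega),
      show k - (k - 2) = 2 by omega, Nat.cast_sub (by omega : 2 ≤ k), Nat.cast_ofNat]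
    linarith

theorem abs_le_mul_Gamma_add_of_le_mul_Gamma_sub_two {a c s : ℝ} (ha : -2 < a) {k : ℕ}
    (hk : 4 ≤ k) (hs : |s| ≤ c * Gamma (k - 2 + a)) :
    |s| ≤ |c| / ((2 + a) * (3 + a)) * Gamma (k + a) := by
  have h2a : 0 < 2 + a := by linarith
  have hk' : (4 : ℝ) ≤ k := by exact_mod_cast hk
  have hΓ := Gamma_add_two_mul_Gamma_le h2a (show 2 + a ≤ k - 2 + a by linarith)
  rw [show (k : ℝ) - 2 + a + 2 = k + a by ring, show 2 + a + 1 = 3 + a by ring] at hΓ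
  calc |s| ≤ |c| * Gamma (k - 2 + a) :=
        hs.trans (mul_le_mul_of_nonneg_right (le_abs_self c) (Gamma_pos_of_pos (by linarith)).le)
    _ ≤ |c| * (Gamma (k + a) / ((2 + a) * (3 + a))) := by
        gcongr
        rw [le_div_iff₀ (mul_pos h2a (by linarith))]
        linarith
    _ = |c| / ((2 + a) * (3 + a)) * Gamma (k + a) := by ring

end Real

/-- Cauchy product bound in the weighted norm `‖y‖ = sup_{k≥2}|y_k|/Γ(k+a)`: if the
coefficients of `G` and `H` satisfy `|G_k| ≤ NG Γ(k+a)` and `|H_k| ≤ NH Γ(k+a)` for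
`k ≥ 2`, then `|(GH)_k| = |Σ_{j=2}^{k-2} G_j H_{k-j}| ≤ C NG NH Γ(k-2+a)` for `k ≥ 4`,
with `C = C(a)`; consequently `GH` also has finite weighted norm. -/
theorem stmt7 (a : ℝ) (ha : -2 < a) :
    ∃ C > (0 : ℝ), ∀ (G H : ℕ → ℝ) (NG NH : ℝ),
      (∀ k, 2 ≤ k → |G k| ≤ NG * Real.Gamma ((k : ℝ) + a)) →
      (∀ k, 2 ≤ k → |H k| ≤ NH * Real.Gamma ((k : ℝ) + a)) →
      (∀ k, 4 ≤ k →
        |∑ j ∈ Finset.Icc 2 (k - 2), G j * H (k - j)|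
          ≤ C * NG * NH * Real.Gamma ((k : ℝ) - 2 + a)) ∧
      ∃ M : ℝ, ∀ k, 4 ≤ k →
        |∑ j ∈ Finset.Icc 2 (k - 2), G j * H (k - j)| ≤ M * Real.Gamma ((k : ℝ) + a) := by
  have hΓ₂ : 0 < Gamma (2 + a) := Gamma_pos_of_pos (by linarith)
  have hΓ₃ : 0 < Gamma (3 + a) := Gamma_pos_of_pos (by linarith)
  set C := 2 * Gamma (2 + a) + Gamma (3 + a)
  refine ⟨C, by linarith, fun G H NG NH hG hH => ?_⟩
  have hNG : 0 ≤ NG := nonneg_of_mul_nonneg_left ((abs_nonneg _).trans (hG 2 le_rfl)) (by simpa)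
  have hNH : 0 ≤ NH := nonneg_of_mul_nonneg_left ((abs_nonneg _).trans (hH 2 le_rfl)) (by simpa)
  have hbound : ∀ k, 4 ≤ k → |∑ j ∈ Icc 2 (k - 2), G j * H (k - j)|
      ≤ C * NG * NH * Gamma (k - 2 + a) := fun k hk =>
    calc _ ≤ NG * NH * ∑ j ∈ Icc 2 (k - 2), Gamma (j + a) * Gamma ((k - j : ℕ) + a) :=
          abs_sum_Icc_mul_le (w := fun n : ℕ => Gamma (n + a)) hG hH k
      _ ≤ NG * NH * (C * Gamma (k - 2 + a)) := by
          gcongr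
          exact sum_Icc_Gamma_mul_Gamma_le ha hk
      _ = C * NG * NH * Gamma (k - 2 + a) := by ring
  exact ⟨hbound, _, fun k hk => abs_le_mul_Gamma_add_of_le_mul_Gamma_sub_two ha hk (hbound k hk)⟩
end

section
/- Let a > -2 and ‖y‖ = sup_{k≥2}|y_k|/Γ(k+a). Then for every l ≥ 2 and every formal series y = Σ_{k≥2} y_k x^k of finite norm, the coefficients of the l-th power satisfy |(y^l)_k| ≤ ‖y‖^l · C^{l-1} · Γ(k-2(l-1)+a) for all k ≥ 2l, where C depends only on a. -/
/-- Coefficients of the formal `l`-fold Cauchy product of `y = Σ_{k≥2} y_k x^k`. -/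
def powCoeff (y : ℕ → ℝ) : ℕ → ℕ → ℝ
  | 0, _ => 0
  | 1, k => y k
  | (l + 2), k => ∑ j ∈ Finset.range (k + 1), powCoeff y (l + 1) j * y (k - j)

/-!
Shift indices so that `k = 2l + n`: since `y` starts at `x²`, `(y^l)_k` vanishes for `k < 2l`,
and `(y^(l+1))_{2(l+1)+n}` is the `n`-th coefficient of the Cauchy product of the shifted
sequences `i ↦ (y^l)_{2l+i}` and `j ↦ y_{j+2}`. With `b = a + 2 > 0`, the majorants `Γ(n + b)`
are closed under convolution up to a constant: `Σ_{i+j=n} Γ(i+b) Γ(j+b) ≤ 2 Γ(b) (b+1) Γ(n+b)`,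
by induction on `n` using `Γ(s+1) = s Γ(s)` and the symmetry `i ↔ j`. Induction on `l` then
turns this into the bound on `|(y^l)_k|`.
-/

open Finset Finset.Nat Real

noncomputable def gammaConv (b : ℝ) (n : ℕ) : ℝ :=
  ∑ p ∈ antidiagonal n, Gamma (p.1 + b) * Gamma (p.2 + b)

lemma gammaConv_zero (b : ℝ) : gammaConv b 0 = Gamma b ^ 2 := by
  simp [gammaConv, sq]

lemma two_mul_gammaConv_succ {b : ℝ} (hb : 0 < b) (n : ℕ) :
    2 * gammaConv b (n + 1) =
      (n + 2 * b) * gammaConv b n + 2 * (n + b) * Gamma (n + b) * Gamma b := by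
  have hΓ : ∀ i : ℕ, Gamma ((i + 1 : ℕ) + b) = (i + b) * Gamma (i + b) := fun i => by
    rw [Nat.cast_succ, add_right_comm, Gamma_add_one (by positivity)]
  have hpeel : gammaConv b (n + 1) = (n + b) * Gamma (n + b) * Gamma b +
      ∑ p ∈ antidiagonal n, (p.2 + b) * (Gamma (p.1 + b) * Gamma (p.2 + b)) := by
    rw [gammaConv, sum_antidiagonal_succ']
    simp only [hΓ, Nat.cast_zero, zero_add]
    congr 1
    exact sum_congr rfl fun p _ => by ring
  -- swapping `i ↔ j` shows that the weights `j + b` and `i + b` have the same total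
  have hswap : ∑ p ∈ antidiagonal n, (p.2 + b) * (Gamma (p.1 + b) * Gamma (p.2 + b)) =
      ∑ p ∈ antidiagonal n, (p.1 + b) * (Gamma (p.1 + b) * Gamma (p.2 + b)) := by
    rw [← sum_antidiagonal_swap]
    exact sum_congr rfl fun p _ => by simp only [Prod.fst_swap, Prod.snd_swap]; ring
  have hsum : ∑ p ∈ antidiagonal n, (p.1 + b) * (Gamma (p.1 + b) * Gamma (p.2 + b)) +
      ∑ p ∈ antidiagonal n, (p.2 + b) * (Gamma (p.1 + b) * Gamma (p.2 + b)) =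
      (n + 2 * b) * gammaConv b n := by
    rw [gammaConv, mul_sum, ← sum_add_distrib]
    refine sum_congr rfl fun p hp => ?_
    rw [← mem_antidiagonal.mp hp, Nat.cast_add]
    ring
  linarith

lemma gammaConv_le {b : ℝ} (hb : 0 < b) :
    ∀ n : ℕ, gammaConv b n ≤ 2 * Gamma b * (b + 1) * Gamma (n + b)
  | 0 => by
    have := Gamma_pos_of_pos hb
    rw [gammaConv_zero, Nat.cast_zero, zero_add]
    nlinarith
  | 1 => by
    have := Gamma_pos_of_pos hb
    have h := two_mul_gammaConv_succ hb 0
    simp only [gammaConv_zero, Nat.cast_zero, zero_add] at h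
    rw [Nat.cast_one, add_comm (1 : ℝ) b, Gamma_add_one hb.ne']
    nlinarith [mul_pos (mul_pos hb hb) (mul_pos this this)]
  | n + 2 => by
    have hs : (0 : ℝ) < (n + 1 : ℕ) + b := by positivity
    have hΓ := Gamma_pos_of_pos hs
    have h := two_mul_gammaConv_succ hb (n + 1)
    have ih := gammaConv_le hb (n + 1)
    rw [show ((n + 2 : ℕ) : ℝ) + b = ((n + 1 : ℕ) + b) + 1 by push_cast; ring,
      Gamma_add_one hs.ne']
    have hrec := mul_le_mul_of_nonneg_left ih (by positivity : (0 : ℝ) ≤ (n + 1 : ℕ) + 2 * b)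
    push_cast at hΓ h hrec ⊢
    -- the bound exceeds the recursion by `2 Γ(b) b n Γ(n+1+b) ≥ 0`
    nlinarith [mul_nonneg (mul_nonneg (mul_nonneg (Gamma_pos_of_pos hb).le hb.le) hΓ.le)
      (Nat.cast_nonneg n : (0 : ℝ) ≤ n)]

section powCoeff

variable {y : ℕ → ℝ}

lemma powCoeff_eq_zero_of_lt (h0 : ∀ k, k < 2 → y k = 0) :
    ∀ l k, k < 2 * l → powCoeff y l k = 0
  | 0, _, _ => rfl
  | 1, k, hk => h0 k (by omega)
  | l + 2, k, hk => sum_eq_zero fun j hj => by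
    rcases lt_or_ge j (2 * (l + 1)) with hj' | hj'
    · rw [powCoeff_eq_zero_of_lt h0 (l + 1) j hj', zero_mul]
    · rw [h0 (k - j) (by rw [mem_range] at hj; omega), mul_zero]

lemma powCoeff_add_two_eq_sum_antidiagonal (h0 : ∀ k, k < 2 → y k = 0) (l n : ℕ) :
    powCoeff y (l + 2) (2 * (l + 2) + n) =
      ∑ p ∈ antidiagonal n, powCoeff y (l + 1) (2 * (l + 1) + p.1) * y (p.2 + 2) := by
  rw [powCoeff, sum_antidiagonal_eq_sum_range_succ
      (fun i j => powCoeff y (l + 1) (2 * (l + 1) + i) * y (j + 2)),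
    show 2 * (l + 2) + n + 1 = 2 * (l + 1) + (n + 1 + 2) by ring, sum_range_add, sum_range_add,
    sum_eq_zero fun j hj => by
      rw [powCoeff_eq_zero_of_lt h0 (l + 1) j (mem_range.mp hj), zero_mul],
    sum_eq_zero (s := range 2) fun j hj => by
      rw [h0 _ (by rw [mem_range] at hj; omega), mul_zero],
    zero_add, add_zero]
  exact sum_congr rfl fun i hi => by
    rw [mem_range] at hi
    congr 2
    omega

theorem abs_powCoeff_le_of_conv_le {g : ℕ → ℝ} {N C : ℝ} (hN : 0 ≤ N) (hC : 0 ≤ C)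
    (h0 : ∀ k, k < 2 → y k = 0) (hy : ∀ n, |y (n + 2)| ≤ N * g n)
    (hg : ∀ n, ∑ p ∈ antidiagonal n, g p.1 * g p.2 ≤ C * g n) :
    ∀ l n, |powCoeff y (l + 1) (2 * (l + 1) + n)| ≤ N ^ (l + 1) * C ^ l * g n
  | 0, n => by simpa [powCoeff, add_comm 2 n] using hy n
  | l + 1, n => by
    have ih := abs_powCoeff_le_of_conv_le hN hC h0 hy hg l
    rw [powCoeff_add_two_eq_sum_antidiagonal h0]
    calc |∑ p ∈ antidiagonal n, powCoeff y (l + 1) (2 * (l + 1) + p.1) * y (p.2 + 2)|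
        ≤ ∑ p ∈ antidiagonal n, |powCoeff y (l + 1) (2 * (l + 1) + p.1)| * |y (p.2 + 2)| :=
          (abs_sum_le_sum_abs _ _).trans_eq (sum_congr rfl fun p _ => abs_mul _ _)
      _ ≤ ∑ p ∈ antidiagonal n, N ^ (l + 1) * C ^ l * g p.1 * (N * g p.2) :=
          sum_le_sum fun p _ =>
            mul_le_mul (ih p.1) (hy p.2) (abs_nonneg _) ((abs_nonneg _).trans (ih p.1))
      _ = N ^ (l + 2) * C ^ l * ∑ p ∈ antidiagonal n, g p.1 * g p.2 := by
          rw [mul_sum]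
          exact sum_congr rfl fun p _ => by ring
      _ ≤ N ^ (l + 2) * C ^ l * (C * g n) := by gcongr; exact hg n
      _ = N ^ (l + 2) * C ^ (l + 1) * g n := by ring

end powCoeff

/-- For `a > -2` there is `C > 0` (depending only on `a`) such that for every formal
series `y = Σ_{k≥2} y_k x^k` with `|y_k| ≤ N Γ(k+a)` and every `l ≥ 2`,
`|(y^l)_k| ≤ N^l C^{l-1} Γ(k-2(l-1)+a)` for all `k ≥ 2l`. -/
theorem stmt8 (a : ℝ) (ha : -2 < a) :
    ∃ C > (0 : ℝ), ∀ (y : ℕ → ℝ) (N : ℝ),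
      (∀ k, k < 2 → y k = 0) →
      (∀ k, 2 ≤ k → |y k| ≤ N * Real.Gamma ((k : ℝ) + a)) →
      ∀ l, 2 ≤ l → ∀ k, 2 * l ≤ k →
        |powCoeff y l k| ≤ N ^ l * C ^ (l - 1) *
          Real.Gamma ((k : ℝ) - 2 * ((l : ℝ) - 1) + a) := by
  have hb : 0 < 2 + a := by linarith
  refine ⟨2 * Gamma (2 + a) * (2 + a + 1), by positivity, fun y N h0 hy l hl k hk => ?_⟩
  have hy' : ∀ n : ℕ, |y (n + 2)| ≤ N * Gamma (n + (2 + a)) := fun n => by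
    simpa [add_assoc] using hy (n + 2) (by omega)
  have hN : 0 ≤ N := by
    have h2 := (abs_nonneg _).trans (hy' 0)
    rw [Nat.cast_zero, zero_add] at h2
    exact nonneg_of_mul_nonneg_left h2 (Gamma_pos_of_pos hb)
  obtain ⟨l, rfl⟩ : ∃ l', l = l' + 1 := ⟨l - 1, by omega⟩
  obtain ⟨n, rfl⟩ : ∃ n, k = 2 * (l + 1) + n := ⟨k - 2 * (l + 1), by omega⟩
  have key := abs_powCoeff_le_of_conv_le hN (by positivity) h0 hy' (gammaConv_le hb) l n
  rwa [Nat.add_sub_cancel,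
    show ((2 * (l + 1) + n : ℕ) : ℝ) - 2 * ((l + 1 : ℕ) - 1) + a = n + (2 + a) by push_cast; ring]
end

section
/- With m^ε(x) = Σ_{k=2}^∞ u_k/(1-εk)·x^k and V^ε(x) = N·(u_N/α)·x^N - (N+1)·(u_{N+1}/(1-α))·x^{N+1}, where ε^{-1} = N + α with N = ⌊ε^{-1}⌋ and α ∈ (0,1), the difference B^ε = m^ε - V^ε has coefficients bounded uniformly in α: for every υ > 0 there exists δ > 0 (independent of α and N ≥ some N_0) such that |B^ε(x)| ≤ υ for all |x| ≤ δ. -/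
/-!
Away from the two resonant indices `k = N, N + 1`, the small divisor `1 - εk = (N + α - k) / (N + α)`
costs at most a factor `k + 1`, uniformly in `α`; at the resonant indices `V^ε` removes exactly the
part of `u_k / (1 - εk)` that blows up as `α → 0` or `α → 1`, leaving `u_k`. Hence every coefficient
of `B^ε` is bounded by `(k + 1) |u_k| ≤ B (2 / ρ)^k`, and `B^ε` is `O(x²)` on `|x| ≤ ρ / 4`.
-/

open Finset

lemma le_succ_mul_abs_sub {N k : ℕ} {α : ℝ} (hα : α ∈ Set.Ioo (0 : ℝ) 1)
    (hkN : k ≠ N) (hkN' : k ≠ N + 1) :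
    (N : ℝ) + α ≤ ((k : ℝ) + 1) * |(N : ℝ) + α - k| := by
  obtain ⟨hα0, hα1⟩ := hα
  rcases lt_or_gt_of_ne hkN with hlt | hgt
  · have hk : (k : ℝ) + 1 ≤ N := by exact_mod_cast hlt
    rw [abs_of_pos (by linarith)]
    nlinarith [mul_nonneg (Nat.cast_nonneg (α := ℝ) k) (by linarith : (0 : ℝ) ≤ N - k - 1 + α)]
  · have hk : (N : ℝ) + 2 ≤ k := by exact_mod_cast (by omega : N + 2 ≤ k)
    rw [abs_of_neg (by linarith)]
    nlinarith

lemma abs_div_one_sub_inv_mul_le {N k : ℕ} {α : ℝ} (hα : α ∈ Set.Ioo (0 : ℝ) 1)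
    (hkN : k ≠ N) (hkN' : k ≠ N + 1) (c : ℝ) :
    |c / (1 - ((N : ℝ) + α)⁻¹ * k)| ≤ ((k : ℝ) + 1) * |c| := by
  have hA : (0 : ℝ) < N + α := by linarith [hα.1, Nat.cast_nonneg (α := ℝ) N]
  have hkey := le_succ_mul_abs_sub hα hkN hkN'
  have hgap : 0 < |(N : ℝ) + α - k| := by
    by_contra h
    rw [le_antisymm (not_lt.mp h) (abs_nonneg _), mul_zero] at hkey
    linarith
  have hdiv : 1 - ((N : ℝ) + α)⁻¹ * k = ((N : ℝ) + α - k) / (N + α) := by field_simp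
  rw [hdiv, abs_div, abs_div, abs_of_pos hA, div_div_eq_mul_div, div_le_iff₀ hgap]
  nlinarith [abs_nonneg c]

/-- The `k`-th term of the power series of `B^ε = m^ε - V^ε`, where `ε⁻¹ = N + α`. -/
noncomputable def remainderTerm (u : ℕ → ℝ) (N : ℕ) (α x : ℝ) (k : ℕ) : ℝ :=
  if k = N ∨ k = N + 1 then u k * x ^ k else u k / (1 - ((N : ℝ) + α)⁻¹ * k) * x ^ k

lemma remainderTerm_eq_zero {u : ℕ → ℝ} {N k : ℕ} {α x : ℝ} (hk : u k = 0) :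
    remainderTerm u N α x k = 0 := by
  simp [remainderTerm, hk]

lemma abs_remainderTerm_le {u : ℕ → ℝ} {N : ℕ} {α : ℝ} (hα : α ∈ Set.Ioo (0 : ℝ) 1)
    (x : ℝ) (k : ℕ) :
    |remainderTerm u N α x k| ≤ ((k : ℝ) + 1) * |u k| * |x| ^ k := by
  unfold remainderTerm
  split_ifs with hk
  · rw [abs_mul, abs_pow, mul_assoc]
    exact le_mul_of_one_le_left (by positivity) (by linarith [Nat.cast_nonneg (α := ℝ) k])
  · obtain ⟨hkN, hkN'⟩ := not_or.mp hk
    rw [abs_mul, abs_pow]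
    exact mul_le_mul_of_nonneg_right (abs_div_one_sub_inv_mul_le hα hkN hkN' _) (by positivity)

lemma abs_remainderTerm_le_geometric {B ρ : ℝ} (hB : 0 ≤ B) (hρ : 0 < ρ) {u : ℕ → ℝ}
    (hu0 : u 0 = 0) (hu1 : u 1 = 0) (hu : ∀ k, 2 ≤ k → |u k| ≤ B / ρ ^ k)
    {N : ℕ} {α : ℝ} (hα : α ∈ Set.Ioo (0 : ℝ) 1) (x : ℝ) (k : ℕ) :
    |remainderTerm u N α x k| ≤ B * (2 * |x| / ρ) ^ k := by
  rcases lt_or_ge k 2 with hk | hk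
  · interval_cases k
    · simp [remainderTerm_eq_zero hu0, hB]
    · simp [remainderTerm_eq_zero hu1]; positivity
  have hk2 : (k : ℝ) + 1 ≤ 2 ^ k := by exact_mod_cast Nat.lt_two_pow_self
  calc |remainderTerm u N α x k| ≤ ((k : ℝ) + 1) * |u k| * |x| ^ k := abs_remainderTerm_le hα x k
    _ ≤ 2 ^ k * (B / ρ ^ k) * |x| ^ k := by gcongr; exact hu k hk
    _ = B * (2 * |x| / ρ) ^ k := by rw [div_pow, mul_pow]; field_simp

lemma hasSum_of_hasSum_remainderTerm {u : ℕ → ℝ} {N : ℕ} {α x S : ℝ}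
    (hα : α ∈ Set.Ioo (0 : ℝ) 1) (h : HasSum (remainderTerm u N α x) S) :
    HasSum (fun k : ℕ => u k / (1 - ((N : ℝ) + α)⁻¹ * (k : ℝ)) * x ^ k)
      (S + ((N : ℝ) * (u N / α) * x ^ N
        - ((N : ℝ) + 1) * (u (N + 1) / (1 - α)) * x ^ (N + 1))) := by
  obtain ⟨hα0, hα1⟩ := hα
  have hA : (N : ℝ) + α ≠ 0 := by positivity
  have h1α : 1 - α ≠ 0 := by linarith
  convert (h.add (hasSum_ite_eq N ((N : ℝ) * (u N / α) * x ^ N))).add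
    (hasSum_ite_eq (N + 1) (-(((N : ℝ) + 1) * (u (N + 1) / (1 - α)) * x ^ (N + 1)))) using 1
  · funext k
    simp only [remainderTerm]
    by_cases hkN : k = N
    · subst hkN
      simp only [true_or, if_true, Nat.ne_of_lt (Nat.lt_succ_self k), if_false, add_zero]
      have : 1 - ((k : ℝ) + α)⁻¹ * k = α / (k + α) := by field_simp; ring
      rw [this]
      field_simp
      ring
    by_cases hkN' : k = N + 1
    · subst hkN'
      simp only [or_true, if_true, hkN, if_false, add_zero]
      have : 1 - ((N : ℝ) + α)⁻¹ * ((N + 1 : ℕ) : ℝ) = -((1 - α) / (N + α)) := by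
        push_cast; field_simp; ring
      rw [this]
      field_simp
      ring
    · simp [hkN, hkN']
  · ring

lemma tsum_sub_eq_tsum_remainderTerm {u : ℕ → ℝ} {N : ℕ} {α x : ℝ}
    (hα : α ∈ Set.Ioo (0 : ℝ) 1) (h : Summable (remainderTerm u N α x)) :
    (∑' k : ℕ, u k / (1 - ((N : ℝ) + α)⁻¹ * (k : ℝ)) * x ^ k)
      - ((N : ℝ) * (u N / α) * x ^ N
        - ((N : ℝ) + 1) * (u (N + 1) / (1 - α)) * x ^ (N + 1))
      = ∑' k, remainderTerm u N α x k := by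
  rw [(hasSum_of_hasSum_remainderTerm hα h.hasSum).tsum_eq]
  ring

lemma abs_tsum_le_of_abs_le_pow {g : ℕ → ℝ} {C s : ℝ} (hg : ∀ k, |g k| ≤ C * s ^ k)
    (hg0 : g 0 = 0) (hg1 : g 1 = 0) (hs0 : 0 ≤ s) (hs : s ≤ 1 / 2) :
    |∑' k, g k| ≤ 2 * C * s ^ 2 := by
  have hs1 : s < 1 := by linarith
  have hsum : Summable g :=
    .of_norm_bounded ((summable_geometric_of_lt_one hs0 hs1).mul_left C) hg
  have htail : HasSum (fun k => C * s ^ 2 * s ^ k) (C * s ^ 2 * (1 - s)⁻¹) :=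
    (hasSum_geometric_of_lt_one hs0 hs1).mul_left _
  have hC : 0 ≤ C := by simpa using (abs_nonneg (g 0)).trans (hg 0)
  rw [← hsum.sum_add_tsum_nat_add 2]
  simp only [sum_range_succ, sum_range_zero, hg0, hg1, zero_add]
  calc |∑' k, g (k + 2)| ≤ C * s ^ 2 * (1 - s)⁻¹ :=
        tsum_of_norm_bounded (f := fun k => g (k + 2)) htail fun k => by
          simpa [pow_add, mul_comm, mul_left_comm] using hg (k + 2)
    _ ≤ C * s ^ 2 * 2 := by
        gcongr
        rw [inv_le_comm₀ (by linarith) two_pos]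
        linarith
    _ = 2 * C * s ^ 2 := by ring

/-- With `m^ε(x) = Σ_{k≥2} u_k/(1-εk) x^k`, `ε⁻¹ = N + α`, and
`V^ε(x) = N (u_N/α) x^N - (N+1)(u_{N+1}/(1-α)) x^{N+1}`, the difference
`B^ε = m^ε - V^ε` is uniformly small: for every `υ > 0` there is `δ > 0`
(independent of `α ∈ (0,1)` and of `N ≥ N₀`) with `|B^ε(x)| ≤ υ` for `|x| ≤ δ`. -/
theorem stmt10 (B ρ : ℝ) (hB : 0 < B) (hρ : 0 < ρ) (u : ℕ → ℝ)
    (hu0 : u 0 = 0) (hu1 : u 1 = 0)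
    (hu : ∀ k, 2 ≤ k → |u k| ≤ B / ρ ^ k) :
    ∃ N₀ : ℕ, ∀ υ : ℝ, 0 < υ → ∃ δ > (0 : ℝ), ∀ N : ℕ, N₀ ≤ N →
      ∀ α ∈ Set.Ioo (0 : ℝ) 1, ∀ x : ℝ, |x| ≤ δ →
        |(∑' k : ℕ, u k / (1 - ((N : ℝ) + α)⁻¹ * (k : ℝ)) * x ^ k)
          - ((N : ℝ) * (u N / α) * x ^ N
             - ((N : ℝ) + 1) * (u (N + 1) / (1 - α)) * x ^ (N + 1))| ≤ υ := by
  refine ⟨0, fun υ hυ => ⟨ρ / 2 * min (1 / 2) (υ / B), by positivity, fun N _ α hα x hx => ?_⟩⟩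
  set s := 2 * |x| / ρ
  have hs0 : 0 ≤ s := by positivity
  have hs : s ≤ min (1 / 2) (υ / B) := by
    rw [div_le_iff₀ hρ]; linarith
  have hs2 : s ≤ 1 / 2 := hs.trans (min_le_left _ _)
  have hg : ∀ k, |remainderTerm u N α x k| ≤ B * s ^ k :=
    abs_remainderTerm_le_geometric hB.le hρ hu0 hu1 hu hα x
  have hsum : Summable (remainderTerm u N α x) :=
    .of_norm_bounded ((summable_geometric_of_lt_one hs0 (by linarith)).mul_left B) hg
  rw [tsum_sub_eq_tsum_remainderTerm hα hsum]
  calc |∑' k, remainderTerm u N α x k|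
      ≤ 2 * B * s ^ 2 := abs_tsum_le_of_abs_le_pow hg (remainderTerm_eq_zero hu0)
          (remainderTerm_eq_zero hu1) hs0 hs2
    _ ≤ B * s := by nlinarith [mul_nonneg hB.le hs0]
    _ ≤ υ := (le_div_iff₀' hB).mp (hs.trans (min_le_right _ _))
end

section
/- (Flapping lemma, resonance from below) Fix N ∈ ℕ, K > 0, suppose u_N ≠ 0 with s = sign(u_N), and suppose |m^ε(x) - V^ε(x)| ≤ K/4 for all |x| ≤ δ and all α ∈ (0,1), where V^ε(x) = N(u_N/α)x^N - (N+1)(u_{N+1}/(1-α))x^{N+1} and ε^{-1} = N + α. Then for all 0 < α < N|u_N|δ^N/K and 0 < δ small enough: if N is even, the continuous curve x ↦ m^ε(x) attains the value sK/2 on both (-δ,0) and (0,δ); if N is odd, it attains -sK/2 on (-δ,0) and sK/2 on (0,δ). -/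
open Set

private lemma aux_rpow_pow {a : ℝ} (ha : 0 < a) {n : ℕ} (hn : n ≠ 0) {δ : ℝ} (hδ : 0 ≤ δ)
    (h : δ ≤ a ^ ((n : ℝ)⁻¹)) : δ ^ n ≤ a := by
  have h2 := pow_le_pow_left₀ hδ h n
  rwa [← Real.rpow_natCast (a ^ ((n:ℝ)⁻¹)) n, ← Real.rpow_mul ha.le,
    inv_mul_cancel₀ (by exact_mod_cast hn), Real.rpow_one] at h2

private lemma aux_ivt_right (g : ℝ → ℝ) (δ : ℝ) (hδ : 0 < δ)
    (hg : ContinuousOn g (Icc 0 δ)) (h0 : g 0 = 0) (σ c : ℝ)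
    (hσ : σ = 1 ∨ σ = -1) (hc : 0 < c) (hb : c < σ * g δ) :
    ∃ x ∈ Ioo (0:ℝ) δ, g x = σ * c := by
  rcases hσ with h | h <;> subst h
  · have hmem : c ∈ Ioo (g 0) (g δ) := ⟨by rw [h0]; exact hc, by linarith⟩
    obtain ⟨x, hx, hgx⟩ := intermediate_value_Ioo hδ.le hg hmem
    exact ⟨x, hx, by rw [hgx]; ring⟩
  · have hmem : -c ∈ Ioo (g δ) (g 0) := ⟨by linarith, by rw [h0]; linarith⟩
    obtain ⟨x, hx, hgx⟩ := intermediate_value_Ioo' hδ.le hg hmem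
    exact ⟨x, hx, by rw [hgx]; ring⟩

private lemma aux_ivt_left (g : ℝ → ℝ) (δ : ℝ) (hδ : 0 < δ)
    (hg : ContinuousOn g (Icc (-δ) 0)) (h0 : g 0 = 0) (σ c : ℝ)
    (hσ : σ = 1 ∨ σ = -1) (hc : 0 < c) (hb : c < σ * g (-δ)) :
    ∃ x ∈ Ioo (-δ) (0:ℝ), g x = σ * c := by
  have hle : -δ ≤ (0:ℝ) := by linarith
  rcases hσ with h | h <;> subst h
  · have hmem : c ∈ Ioo (g 0) (g (-δ)) := ⟨by rw [h0]; exact hc, by linarith⟩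
    obtain ⟨x, hx, hgx⟩ := intermediate_value_Ioo' hle hg hmem
    exact ⟨x, hx, by rw [hgx]; ring⟩
  · have hmem : -c ∈ Ioo (g (-δ)) (g 0) := ⟨by linarith, by rw [h0]; linarith⟩
    obtain ⟨x, hx, hgx⟩ := intermediate_value_Ioo hle hg hmem
    exact ⟨x, hx, by rw [hgx]; ring⟩

set_option maxHeartbeats 1000000 in
/-- Flapping lemma (resonance from below). Fix `N`, `K > 0` with `u_N ≠ 0` and
`s = sign(u_N)`. If `|m^ε - V^ε| ≤ K/4` on `|x| ≤ δ` uniformly in `α ∈ (0,1)`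
(with `ε⁻¹ = N + α`), then for all `0 < α < N|u_N|δ^N/K` and `δ > 0` small enough:
if `N` is even, `m^ε` attains the value `sK/2` both on `(-δ,0)` and on `(0,δ)`;
if `N` is odd, it attains `-sK/2` on `(-δ,0)` and `sK/2` on `(0,δ)`. -/
theorem stmt11 (B ρ K : ℝ) (hB : 0 < B) (hρ : 0 < ρ) (hK : 0 < K)
    (N : ℕ) (hN : 1 ≤ N) (u : ℕ → ℝ) (hu0 : u 0 = 0) (hu1 : u 1 = 0)
    (hu : ∀ k, 2 ≤ k → |u k| ≤ B / ρ ^ k) (huN : u N ≠ 0) :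
    ∃ δ₀ > (0 : ℝ), ∀ δ : ℝ, 0 < δ → δ ≤ δ₀ →
      (∀ α ∈ Set.Ioo (0 : ℝ) 1, ∀ x : ℝ, |x| ≤ δ →
        |(∑' k : ℕ, u k / (1 - ((N : ℝ) + α)⁻¹ * (k : ℝ)) * x ^ k)
          - ((N : ℝ) * (u N / α) * x ^ N
             - ((N : ℝ) + 1) * (u (N + 1) / (1 - α)) * x ^ (N + 1))| ≤ K / 4) →
      ∀ α : ℝ, 0 < α → α < 1 → α < (N : ℝ) * |u N| * δ ^ N / K →
        (Even N →
          (∃ x ∈ Set.Ioo (-δ) (0 : ℝ),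
            (∑' k : ℕ, u k / (1 - ((N : ℝ) + α)⁻¹ * (k : ℝ)) * x ^ k)
              = Real.sign (u N) * K / 2) ∧
          (∃ x ∈ Set.Ioo (0 : ℝ) δ,
            (∑' k : ℕ, u k / (1 - ((N : ℝ) + α)⁻¹ * (k : ℝ)) * x ^ k)
              = Real.sign (u N) * K / 2)) ∧
        (Odd N →
          (∃ x ∈ Set.Ioo (-δ) (0 : ℝ),
            (∑' k : ℕ, u k / (1 - ((N : ℝ) + α)⁻¹ * (k : ℝ)) * x ^ k)
              = -(Real.sign (u N)) * K / 2) ∧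
          (∃ x ∈ Set.Ioo (0 : ℝ) δ,
            (∑' k : ℕ, u k / (1 - ((N : ℝ) + α)⁻¹ * (k : ℝ)) * x ^ k)
              = Real.sign (u N) * K / 2)) := by
  have hNR : (1:ℝ) ≤ (N:ℝ) := by exact_mod_cast hN
  have huNpos : 0 < |u N| := abs_pos.mpr huN
  have h2N : (0:ℝ) < 2 * (N:ℝ) * |u N| := by nlinarith
  have haux1 : 0 < K / (2 * (N:ℝ) * |u N|) := div_pos hK h2N
  have haux2 : 0 < K * ρ ^ (N+1) / (16 * ((N:ℝ)+1) * B) := by positivity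
  refine ⟨min (ρ/2) (min ((K / (2 * (N:ℝ) * |u N|)) ^ ((N:ℝ)⁻¹))
      ((K * ρ ^ (N+1) / (16 * ((N:ℝ)+1) * B)) ^ (((N+1:ℕ):ℝ)⁻¹))),
    lt_min (by positivity) (lt_min (Real.rpow_pos_of_pos haux1 _)
      (Real.rpow_pos_of_pos haux2 _)), ?_⟩
  intro δ hδpos hδle H α hα0 hα1 hαlt
  have hδρ : δ ≤ ρ/2 := hδle.trans (min_le_left _ _)
  have h1 : δ ≤ (K / (2 * (N:ℝ) * |u N|)) ^ ((N:ℝ)⁻¹) :=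
    hδle.trans ((min_le_right _ _).trans (min_le_left _ _))
  have h2 : δ ≤ (K * ρ ^ (N+1) / (16 * ((N:ℝ)+1) * B)) ^ (((N+1:ℕ):ℝ)⁻¹) :=
    hδle.trans ((min_le_right _ _).trans (min_le_right _ _))
  -- numeric consequences
  have hδN : δ ^ N ≤ K / (2 * (N:ℝ) * |u N|) :=
    aux_rpow_pow (div_pos hK h2N) (by omega) hδpos.le h1
  have hδN1 : δ ^ (N+1) ≤ K * ρ ^ (N+1) / (16 * ((N:ℝ)+1) * B) :=
    aux_rpow_pow (by positivity) (by omega) hδpos.le h2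
  have hKα : α * K < (N:ℝ) * |u N| * δ ^ N := (lt_div_iff₀ hK).mp hαlt
  have hNδ : (N:ℝ) * |u N| * δ ^ N ≤ K / 2 := by
    rw [le_div_iff₀ h2N] at hδN
    nlinarith
  have hα2 : α < 1/2 := by nlinarith
  have h1α : (0:ℝ) < 1 - α := by linarith
  have hT1 : K < (N:ℝ) * |u N| * δ ^ N / α := by
    rw [lt_div_iff₀ hα0]; linarith [hKα]
  -- second-term bound
  have huN1 : |u (N+1)| ≤ B / ρ ^ (N+1) := hu (N+1) (by omega)
  have hP : (0:ℝ) < ρ ^ (N+1) := by positivity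
  have hBt' : ((N:ℝ)+1) * |u (N+1)| * δ ^ (N+1) ≤ K / 16 := by
    have e1 : δ ^ (N+1) * (16 * ((N:ℝ)+1) * B) ≤ K * ρ ^ (N+1) := by
      rw [le_div_iff₀ (by positivity)] at hδN1; exact hδN1
    have e2 : |u (N+1)| * ρ ^ (N+1) ≤ B := by
      rw [le_div_iff₀ hP] at huN1; exact huN1
    nlinarith [abs_nonneg (u (N+1)), pow_nonneg hδpos.le (N+1),
      mul_le_mul_of_nonneg_left e2 (by positivity : (0:ℝ) ≤ ((N:ℝ)+1) * δ ^ (N+1))]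
  -- the clamped function g
  have hNα : (0:ℝ) < (N:ℝ) + α := by linarith
  have hmin : (0:ℝ) < min α (1-α) := lt_min hα0 (by linarith)
  set cl : ℝ → ℝ := fun x => max (-δ) (min x δ) with hcl_def
  have hclx : ∀ x : ℝ, |x| ≤ δ → cl x = x := by
    intro x hx
    rw [abs_le] at hx
    simp only [hcl_def]
    rw [min_eq_left hx.2, max_eq_right hx.1]
  have hclbd : ∀ x : ℝ, |cl x| ≤ δ := by
    intro x
    rw [abs_le]
    exact ⟨le_max_left _ _, max_le (by linarith) (min_le_right _ _)⟩
  set g : ℝ → ℝ := fun x => ∑' k : ℕ, u k / (1 - ((N : ℝ) + α)⁻¹ * (k : ℝ)) * (cl x) ^ k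
    with hg_def
  have hgm : ∀ x : ℝ, |x| ≤ δ →
      g x = ∑' k : ℕ, u k / (1 - ((N : ℝ) + α)⁻¹ * (k : ℝ)) * x ^ k := by
    intro x hx
    simp only [hg_def, hclx x hx]
  have hdk : ∀ k : ℕ, min α (1-α) / ((N:ℝ) + α) ≤ |1 - ((N : ℝ) + α)⁻¹ * (k : ℝ)| := by
    intro k
    have hrw : 1 - ((N : ℝ) + α)⁻¹ * (k : ℝ) = ((N:ℝ) + α - k) / ((N:ℝ) + α) := by
      field_simp
    rw [hrw, abs_div, abs_of_pos hNα]
    gcongr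
    rcases le_or_gt k N with h | h
    · have hk : (k:ℝ) ≤ N := by exact_mod_cast h
      rw [abs_of_pos (by linarith : (0:ℝ) < (N:ℝ) + α - k)]
      have := min_le_left α (1-α)
      linarith
    · have hk : (N:ℝ) + 1 ≤ k := by exact_mod_cast h
      rw [abs_of_neg (by linarith : (N:ℝ) + α - k < 0)]
      have := min_le_right α (1-α)
      linarith
  set M : ℝ := ((N:ℝ)+1) * B / min α (1-α) with hM_def
  have hbound : ∀ (k : ℕ) (x : ℝ),
      ‖u k / (1 - ((N : ℝ) + α)⁻¹ * (k : ℝ)) * (cl x) ^ k‖ ≤ M * (δ/ρ)^k := by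
    intro k x
    have hMpos : 0 < M := by positivity
    have hgeom : (0:ℝ) ≤ M * (δ/ρ)^k := by positivity
    rcases Nat.lt_or_ge k 2 with hk2 | hk2
    · interval_cases k
      · simpa [hu0] using hgeom
      · simpa [hu1] using hgeom
    · rw [Real.norm_eq_abs, abs_mul, abs_div, abs_pow]
      have hnum : |u k| ≤ B / ρ ^ k := hu _ hk2
      have hden := hdk k
      have hc : |u k| / |1 - ((N : ℝ) + α)⁻¹ * (k : ℝ)|
          ≤ (B / ρ ^ k) / (min α (1-α) / ((N:ℝ) + α)) := by
        apply div_le_div₀ (by positivity) hnum (by positivity) hden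
      have hxk : |cl x| ^ k ≤ δ ^ k :=
        pow_le_pow_left₀ (abs_nonneg _) (hclbd x) _
      calc |u k| / |1 - ((N : ℝ) + α)⁻¹ * (k : ℝ)| * |cl x| ^ k
          ≤ ((B / ρ ^ k) / (min α (1-α) / ((N:ℝ) + α))) * δ ^ k := by
            apply mul_le_mul hc hxk (by positivity) (by positivity)
        _ = (B * ((N:ℝ)+α) / min α (1-α)) * (δ^k/ρ^k) := by
            field_simp
        _ ≤ M * (δ/ρ)^k := by
            rw [div_pow, hM_def]
            have hcoef : B * ((N:ℝ)+α) / min α (1-α) ≤ ((N:ℝ)+1) * B / min α (1-α) := by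
              exact div_le_div₀ (by positivity) (by nlinarith) hmin le_rfl
            exact mul_le_mul_of_nonneg_right hcoef (by positivity)
  have hsum : Summable (fun k : ℕ => M * (δ/ρ)^k) :=
    (summable_geometric_of_lt_one (by positivity) (by rw [div_lt_one hρ]; linarith)).mul_left M
  have hgc : Continuous g := by
    apply continuous_tsum ?_ hsum hbound
    intro k
    have : Continuous cl := continuous_const.max (continuous_id.min continuous_const)
    exact continuous_const.mul (this.pow k)
  have hg0 : g 0 = 0 := by
    rw [hgm 0 (by simp [hδpos.le])]
    have hz : ∀ k : ℕ, u k / (1 - ((N : ℝ) + α)⁻¹ * (k : ℝ)) * (0:ℝ) ^ k = 0 := by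
      intro k
      rcases k with _ | m
      · simp [hu0]
      · simp
    rw [tsum_congr hz, tsum_zero]
  -- endpoint values
  have hδabs : |δ| ≤ δ := by rw [abs_of_pos hδpos]
  have hmδabs : |(-δ)| ≤ δ := by rw [abs_neg, abs_of_pos hδpos]
  have Hδ := H α ⟨hα0, hα1⟩ δ hδabs
  have Hmδ := H α ⟨hα0, hα1⟩ (-δ) hmδabs
  rw [← hgm δ hδabs] at Hδ
  rw [← hgm (-δ) hmδabs] at Hmδ
  set Aval := (N:ℝ) * (u N / α) * δ ^ N with hA_def
  set Bval := ((N:ℝ)+1) * (u (N+1) / (1-α)) * δ ^ (N+1) with hB_def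
  set e : ℝ := (-1:ℝ)^N with he_def
  have he : e = 1 ∨ e = -1 := by
    rcases Nat.even_or_odd N with h | h
    · left; rw [he_def]; exact h.neg_one_pow
    · right; rw [he_def]; exact h.neg_one_pow
  have hVneg : (N:ℝ) * (u N / α) * (-δ) ^ N - ((N:ℝ)+1) * (u (N+1) / (1-α)) * (-δ) ^ (N+1)
      = e * (Aval + Bval) := by
    rw [hA_def, hB_def, he_def, neg_pow δ N, neg_pow δ (N+1), pow_succ (-1:ℝ) N]
    ring
  rw [hVneg] at Hmδ
  set s : ℝ := Real.sign (u N) with hs_def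
  have hs : s = 1 ∨ s = -1 := by
    rcases huN.lt_or_gt with h | h
    · right; rw [hs_def]; exact Real.sign_of_neg h
    · left; rw [hs_def]; exact Real.sign_of_pos h
  have hsu : s * u N = |u N| := by
    rcases huN.lt_or_gt with h | h
    · rw [hs_def, Real.sign_of_neg h, abs_of_neg h]; ring
    · rw [hs_def, Real.sign_of_pos h, abs_of_pos h]; ring
  have hsA : K < s * Aval := by
    rw [hA_def]
    calc K < (N:ℝ) * |u N| * δ ^ N / α := hT1
      _ = s * ((N:ℝ) * (u N / α) * δ ^ N) := by rw [← hsu]; field_simp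
  have hBv : |Bval| ≤ K / 8 := by
    rw [hB_def]
    have hab : |((N:ℝ)+1) * (u (N+1) / (1-α)) * δ ^ (N+1)|
        = ((N:ℝ)+1) * |u (N+1)| * δ ^ (N+1) / (1-α) := by
      rw [abs_mul, abs_mul, abs_div, abs_of_pos h1α,
        abs_of_pos (by linarith : (0:ℝ) < (N:ℝ)+1), abs_pow, abs_of_pos hδpos]
      ring
    rw [hab]
    calc ((N:ℝ)+1) * |u (N+1)| * δ ^ (N+1) / (1-α) ≤ (K/16) / (1/2) :=
          div_le_div₀ (by positivity) hBt' (by norm_num) (by linarith)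
      _ = K/8 := by ring
  have h4δ := abs_le.mp Hδ
  have h4m := abs_le.mp Hmδ
  have h8 := abs_le.mp hBv
  have hgδ : K/2 < s * g δ := by
    rcases hs with h | h <;> rw [h] at hsA ⊢ <;>
      simp only [one_mul, neg_one_mul, neg_mul] at hsA ⊢ <;>
      linarith [h4δ.1, h4δ.2, h8.1, h8.2]
  have hgmδ : K/2 < (s * e) * g (-δ) := by
    rcases hs with h | h <;> rcases he with h2 | h2 <;>
      rw [h] at hsA ⊢ <;> rw [h2] at h4m ⊢ <;>
      simp only [one_mul, mul_one, neg_one_mul, mul_neg, neg_neg, neg_mul] at hsA h4m ⊢ <;>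
      linarith [h4m.1, h4m.2, h8.1, h8.2]
  have hse : s * e = 1 ∨ s * e = -1 := by
    rcases hs with h | h <;> rcases he with h2 | h2 <;> rw [h, h2] <;> norm_num
  obtain ⟨xr, hxr, hgxr⟩ := aux_ivt_right g δ hδpos hgc.continuousOn hg0 s (K/2) hs
    (by positivity) hgδ
  obtain ⟨xl, hxl, hgxl⟩ := aux_ivt_left g δ hδpos hgc.continuousOn hg0 (s*e) (K/2) hse
    (by positivity) hgmδ
  have hxr' : |xr| ≤ δ := by rw [abs_of_pos hxr.1]; exact hxr.2.le
  have hxl' : |xl| ≤ δ := by rw [abs_of_neg hxl.2]; linarith [hxl.1]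
  have hright : (∑' k : ℕ, u k / (1 - ((N : ℝ) + α)⁻¹ * (k : ℝ)) * xr ^ k) = s * K / 2 := by
    rw [← hgm xr hxr', hgxr]; ring
  constructor
  · intro hEven
    have he1 : e = 1 := by rw [he_def]; exact hEven.neg_one_pow
    refine ⟨⟨xl, hxl, ?_⟩, ⟨xr, hxr, hright⟩⟩
    rw [← hgm xl hxl', hgxl, he1]; ring
  · intro hOdd
    have he1 : e = -1 := by rw [he_def]; exact hOdd.neg_one_pow
    refine ⟨⟨xl, hxl, ?_⟩, ⟨xr, hxr, hright⟩⟩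
    rw [← hgm xl hxl', hgxl, he1]; ring
end

section
/- Let ε^{-1} ∉ ℕ, a real, and H analytic on (-1,1) with H(x) = O(x^{N+1}) at 0 where N = ⌊ε^{-1}⌋. Define T^ε[H](x) = x^{ε^{-1}}(1-x)^{-(ε^{-1}+a)} ∫_0^x (1-v)^{ε^{-1}+a-1} v^{-(ε^{-1}+1)} H(v) dv for 0 < x < 1. Then G = T^ε[H] satisfies the ODE ε·x(1-x)·G'(x) - (1+εax)·G(x) = ε·H(x) on (0,1). -/
open Asymptotics

/-- For `ε⁻¹ ∉ ℕ`, `N = ⌊ε⁻¹⌋`, and `H` analytic on `(-1,1)` with `H = O(x^{N+1})` at `0`,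
the function `G = T^ε[H]` defined by
`G(x) = x^{ε⁻¹}(1-x)^{-(ε⁻¹+a)} ∫_0^x (1-v)^{ε⁻¹+a-1} v^{-(ε⁻¹+1)} H(v) dv`
satisfies `ε x(1-x)G'(x) - (1+εax)G(x) = ε H(x)` on `(0,1)`. -/
theorem stmt16 (ε a : ℝ) (hε : 0 < ε) (hres : ∀ n : ℕ, ε⁻¹ ≠ (n : ℝ))
    (N : ℕ) (hN : N = ⌊ε⁻¹⌋₊)
    (H : ℝ → ℝ) (hH : AnalyticOnNhd ℝ H (Set.Ioo (-1 : ℝ) 1))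
    (hHO : H =O[nhds 0] fun x : ℝ => x ^ (N + 1)) :
    ∀ x ∈ Set.Ioo (0 : ℝ) 1,
      ε * x * (1 - x) * deriv (fun x : ℝ =>
          x ^ (ε⁻¹) * (1 - x) ^ (-(ε⁻¹ + a)) *
            ∫ v in (0 : ℝ)..x, (1 - v) ^ (ε⁻¹ + a - 1) * v ^ (-(ε⁻¹ + 1)) * H v) x
        - (1 + ε * a * x) * (x ^ (ε⁻¹) * (1 - x) ^ (-(ε⁻¹ + a)) *
            ∫ v in (0 : ℝ)..x, (1 - v) ^ (ε⁻¹ + a - 1) * v ^ (-(ε⁻¹ + 1)) * H v)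
      = ε * H x := by
  intro x hx
  obtain ⟨hx0, hx1⟩ := hx
  have hεinv : (0 : ℝ) < ε⁻¹ := inv_pos.mpr hε
  have h1x : (0 : ℝ) < 1 - x := by linarith
  set f : ℝ → ℝ := fun v => (1 - v) ^ (ε⁻¹ + a - 1) * v ^ (-(ε⁻¹ + 1)) * H v with hf
  -- continuity of f on (0,1)
  have hfc : ∀ y ∈ Set.Ioo (0 : ℝ) 1, ContinuousAt f y := by
    intro y hy
    have hy0 : y ≠ 0 := ne_of_gt hy.1
    have hy1 : (1 : ℝ) - y ≠ 0 := by have := hy.2; intro h; linarith [sub_eq_zero.mp h]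
    have h1 : ContinuousAt (fun v : ℝ => (1 - v) ^ (ε⁻¹ + a - 1)) y := by
      exact ContinuousAt.comp (Real.continuousAt_rpow_const _ _ (Or.inl hy1))
        (by fun_prop)
    have h2 : ContinuousAt (fun v : ℝ => v ^ (-(ε⁻¹ + 1))) y :=
      Real.continuousAt_rpow_const _ _ (Or.inl hy0)
    have h3 : ContinuousAt H y := (hH y ⟨by linarith [hy.1], hy.2⟩).continuousAt
    exact (h1.mul h2).mul h3
  have hfcOn : ContinuousOn f (Set.Ioo (0 : ℝ) 1) :=
    fun y hy => (hfc y hy).continuousWithinAt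
  -- the exponent N - ε⁻¹ is > -1
  have hrgt : (-1 : ℝ) < (N : ℝ) - ε⁻¹ := by
    have : ε⁻¹ < (⌊ε⁻¹⌋₊ : ℝ) + 1 := Nat.lt_floor_add_one _
    rw [hN]; push_cast; linarith
  -- choose constants from the big-O bound
  obtain ⟨c, hc0, hcO⟩ := hHO.exists_pos
  rw [isBigOWith_iff] at hcO
  obtain ⟨δ₀, hδ₀, hδ₀b⟩ := Metric.eventually_nhds_iff.mp hcO
  set δ : ℝ := min (δ₀ / 2) (x / 2) with hδdef
  have hδpos : 0 < δ := lt_min (by linarith) (by linarith)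
  have hδx : δ < x := lt_of_le_of_lt (min_le_right _ _) (by linarith)
  have hδ1 : δ < 1 := by
    have : δ ≤ x / 2 := min_le_right _ _
    linarith
  have hδδ₀ : δ < δ₀ := lt_of_le_of_lt (min_le_left _ _) (by linarith)
  set M : ℝ := max 1 ((1 - δ) ^ (ε⁻¹ + a - 1)) with hM
  have hM0 : (0 : ℝ) ≤ M := le_trans zero_le_one (le_max_left _ _)
  -- integrability near 0
  have hg : MeasureTheory.IntegrableOn (fun v : ℝ => (c * M) * v ^ ((N : ℝ) - ε⁻¹))
      (Set.Ioc 0 δ) := by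
    have h1 : IntervalIntegrable (fun v : ℝ => v ^ ((N : ℝ) - ε⁻¹)) MeasureTheory.volume 0 δ :=
      intervalIntegral.intervalIntegrable_rpow' hrgt
    exact (intervalIntegrable_iff_integrableOn_Ioc_of_le hδpos.le).mp (h1.const_mul _)
  have hmeasδ : MeasureTheory.AEStronglyMeasurable f
      (MeasureTheory.volume.restrict (Set.Ioc 0 δ)) :=
    (hfcOn.mono (fun v hv => ⟨hv.1, lt_of_le_of_lt hv.2 hδ1⟩)
      : ContinuousOn f (Set.Ioc 0 δ)).aestronglyMeasurable measurableSet_Ioc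
  have hbound : ∀ v ∈ Set.Ioc (0 : ℝ) δ, ‖f v‖ ≤ ‖(c * M) * v ^ ((N : ℝ) - ε⁻¹)‖ := by
    intro v hv
    have hv0 : 0 < v := hv.1
    have hv1 : v ≤ δ := hv.2
    have h1v : 0 < 1 - v := by linarith
    -- bound on the (1-v) factor
    have hMv : (1 - v) ^ (ε⁻¹ + a - 1) ≤ M := by
      rcases le_or_gt 0 (ε⁻¹ + a - 1) with h | h
      · exact le_trans (Real.rpow_le_one h1v.le (by linarith) h) (le_max_left _ _)
      · exact le_trans (Real.rpow_le_rpow_of_nonpos (by linarith) (by linarith) h.le)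
          (le_max_right _ _)
    have hHv : |H v| ≤ c * v ^ ((N : ℝ) + 1) := by
      have := hδ₀b (y := v) (by rw [Real.dist_eq, sub_zero, abs_of_pos hv0]; linarith)
      rw [Real.norm_eq_abs, Real.norm_eq_abs, abs_pow, abs_of_pos hv0] at this
      calc |H v| ≤ c * v ^ (N + 1) := this
        _ = c * v ^ ((N : ℝ) + 1) := by
            rw [show ((N : ℝ) + 1) = ((N + 1 : ℕ) : ℝ) by push_cast; ring,
              Real.rpow_natCast]
    have hvpow : v ^ (-(ε⁻¹ + 1)) * v ^ ((N : ℝ) + 1) = v ^ ((N : ℝ) - ε⁻¹) := by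
      rw [← Real.rpow_add hv0]; congr 1; ring
    have hfv : ‖f v‖ = (1 - v) ^ (ε⁻¹ + a - 1) * v ^ (-(ε⁻¹ + 1)) * |H v| := by
      rw [hf, Real.norm_eq_abs, abs_mul, abs_mul,
        abs_of_nonneg (Real.rpow_nonneg h1v.le _), abs_of_nonneg (Real.rpow_nonneg hv0.le _)]
    calc ‖f v‖ = (1 - v) ^ (ε⁻¹ + a - 1) * v ^ (-(ε⁻¹ + 1)) * |H v| := hfv
      _ ≤ M * v ^ (-(ε⁻¹ + 1)) * (c * v ^ ((N : ℝ) + 1)) := by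
          have h2 : (0:ℝ) ≤ v ^ (-(ε⁻¹ + 1)) := Real.rpow_nonneg hv0.le _
          exact mul_le_mul (mul_le_mul_of_nonneg_right hMv h2) hHv (abs_nonneg _)
            (by positivity)
      _ = (c * M) * (v ^ (-(ε⁻¹ + 1)) * v ^ ((N : ℝ) + 1)) := by ring
      _ = (c * M) * v ^ ((N : ℝ) - ε⁻¹) := by rw [hvpow]
      _ ≤ ‖(c * M) * v ^ ((N : ℝ) - ε⁻¹)‖ := le_abs_self _
  have hint1 : MeasureTheory.IntegrableOn f (Set.Ioc 0 δ) := by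
    refine MeasureTheory.Integrable.mono hg hmeasδ ?_
    rw [MeasureTheory.ae_restrict_iff' measurableSet_Ioc]
    exact MeasureTheory.ae_of_all _ hbound
  have hint2 : MeasureTheory.IntegrableOn f (Set.Ioc δ x) := by
    have hsub : Set.Icc δ x ⊆ Set.Ioo (0 : ℝ) 1 := fun v hv =>
      ⟨lt_of_lt_of_le hδpos hv.1, lt_of_le_of_lt hv.2 hx1⟩
    exact ((hfcOn.mono hsub).integrableOn_Icc).mono_set Set.Ioc_subset_Icc_self
  have hfint : IntervalIntegrable f MeasureTheory.volume 0 x := by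
    rw [intervalIntegrable_iff_integrableOn_Ioc_of_le hx0.le,
      ← Set.Ioc_union_Ioc_eq_Ioc hδpos.le hδx.le]
    exact hint1.union hint2
  -- FTC: derivative of the integral
  have hI : HasDerivAt (fun u : ℝ => ∫ v in (0 : ℝ)..u, f v) (f x) x :=
    intervalIntegral.integral_hasDerivAt_right hfint
      ⟨Set.Ioo 0 1, Ioo_mem_nhds hx0 hx1, hfcOn.aestronglyMeasurable measurableSet_Ioo⟩
      (hfc x ⟨hx0, hx1⟩)
  -- derivative of J
  have hJ1 : HasDerivAt (fun y : ℝ => y ^ ε⁻¹) (ε⁻¹ * x ^ (ε⁻¹ - 1)) x :=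
    Real.hasDerivAt_rpow_const (Or.inl (ne_of_gt hx0))
  have hJ2 : HasDerivAt (fun y : ℝ => (1 - y) ^ (-(ε⁻¹ + a)))
      ((-(ε⁻¹ + a) * (1 - x) ^ (-(ε⁻¹ + a) - 1)) * (-1)) x := by
    have hin : HasDerivAt (fun y : ℝ => 1 - y) (-1) x := by
      simpa using (hasDerivAt_id x).const_sub 1
    exact (Real.hasDerivAt_rpow_const (p := -(ε⁻¹ + a)) (Or.inl (ne_of_gt h1x))).comp x hin
  have hd : deriv (fun y : ℝ =>
      y ^ (ε⁻¹) * (1 - y) ^ (-(ε⁻¹ + a)) *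
        ∫ v in (0 : ℝ)..y, (1 - v) ^ (ε⁻¹ + a - 1) * v ^ (-(ε⁻¹ + 1)) * H v) x
      = (ε⁻¹ * x ^ (ε⁻¹ - 1) * (1 - x) ^ (-(ε⁻¹ + a))
          + x ^ ε⁻¹ * ((-(ε⁻¹ + a) * (1 - x) ^ (-(ε⁻¹ + a) - 1)) * (-1)))
          * (∫ v in (0 : ℝ)..x, f v)
        + x ^ ε⁻¹ * (1 - x) ^ (-(ε⁻¹ + a)) * f x :=
    HasDerivAt.deriv ((hJ1.mul hJ2).mul hI)
  rw [hd]
  -- algebraic identities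
  have e1 : x ^ (ε⁻¹ - 1) = x ^ ε⁻¹ / x := by
    rw [Real.rpow_sub hx0, Real.rpow_one]
  have e2 : (1 - x) ^ (-(ε⁻¹ + a) - 1) = (1 - x) ^ (-(ε⁻¹ + a)) / (1 - x) := by
    rw [Real.rpow_sub h1x, Real.rpow_one]
  have key1 : ε * x * (1 - x) *
      (ε⁻¹ * x ^ (ε⁻¹ - 1) * (1 - x) ^ (-(ε⁻¹ + a))
        + x ^ ε⁻¹ * ((-(ε⁻¹ + a) * (1 - x) ^ (-(ε⁻¹ + a) - 1)) * (-1)))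
      = (1 + ε * a * x) * (x ^ ε⁻¹ * (1 - x) ^ (-(ε⁻¹ + a))) := by
    rw [e1, e2]
    field_simp
    ring
  have key2 : ε * x * (1 - x) * (x ^ ε⁻¹ * (1 - x) ^ (-(ε⁻¹ + a)) * f x) = ε * H x := by
    have e3 : (1 - x) ^ (-(ε⁻¹ + a)) * (1 - x) ^ (ε⁻¹ + a - 1) = (1 - x)⁻¹ := by
      rw [← Real.rpow_add h1x, show -(ε⁻¹ + a) + (ε⁻¹ + a - 1) = -1 by ring,
        Real.rpow_neg_one]
    have e4 : x ^ ε⁻¹ * x ^ (-(ε⁻¹ + 1)) = x⁻¹ := by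
      rw [← Real.rpow_add hx0, show ε⁻¹ + -(ε⁻¹ + 1) = -1 by ring, Real.rpow_neg_one]
    calc ε * x * (1 - x) * (x ^ ε⁻¹ * (1 - x) ^ (-(ε⁻¹ + a)) * f x)
        = ε * x * (1 - x) * ((x ^ ε⁻¹ * x ^ (-(ε⁻¹ + 1)))
            * ((1 - x) ^ (-(ε⁻¹ + a)) * (1 - x) ^ (ε⁻¹ + a - 1)) * H x) := by
          rw [hf]; ring
      _ = ε * x * (1 - x) * (x⁻¹ * (1 - x)⁻¹ * H x) := by rw [e3, e4]
      _ = ε * H x := by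
          field_simp
  linear_combination (∫ v in (0 : ℝ)..x, f v) * key1 + key2
end

section
/- Let ε^{-1} = N+α ∉ ℕ with N = ⌊ε^{-1}⌋, α ∈ (0,1), and a > -2. Then for 0 ≤ x < 1, the operator value T^ε[(·)^{N+1}](x) = x^{ε^{-1}}(1-x)^{-(ε^{-1}+a)} ∫_0^x (1-v)^{ε^{-1}+a-1} v^{-α} dv admits the absolutely convergent power series representation T^ε[(·)^{N+1}](x) = (Γ(1-α)/Γ(N+1+a)) · Σ_{k=N+1}^∞ (Γ(k+a)/Γ(k+1-ε^{-1})) x^k. -/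
/-!
With `p = 1 - α` and `q = ε⁻¹ + a` the integral is the incomplete beta integral
`B(x; p, q) = ∫₀ˣ v^(p-1) (1-v)^(q-1) dv`, and the claim is its hypergeometric expansion.
Differentiating `v^s (1-v)^q` gives the recurrence
`x^s (1-x)^q = s B(x; s, q) - (s+q) B(x; s+1, q)`.
Normalised by Gamma factors, it says that the `j`-th term of the series times `x^p (1-x)^q` is
`e j - e (j+1)` with `e j = Γ(p+j+q)/Γ(p+j) · B(x; p+j, q)`, so the series telescopes to `e 0`;
the remainder `e j` tends to zero because `B(x; s, q) = O(x^s / s)` makes it dominated by the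
terms of the series, which converges by the ratio test.
-/

open Real Filter Set intervalIntegral
open scoped Topology

noncomputable section

def incompleteBeta (x p q : ℝ) : ℝ :=
  ∫ v in (0 : ℝ)..x, v ^ (p - 1) * (1 - v) ^ (q - 1)

variable {x p q s t : ℝ}

lemma continuousOn_one_sub_rpow (r : ℝ) : ContinuousOn (fun v : ℝ => (1 - v) ^ r) (Iio 1) :=
  fun _ hv => ((continuousAt_const.sub continuousAt_id).rpow_const
    (Or.inl (sub_ne_zero.2 (ne_of_lt hv).symm))).continuousWithinAt

lemma uIcc_zero_subset_Iio_one (hx : x < 1) : uIcc 0 x ⊆ Iio 1 := fun v hv => by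
  rcases mem_uIcc.1 hv with h | h <;> exact mem_Iio.2 (by linarith [h.1, h.2])

lemma intervalIntegrable_incompleteBeta (hp : 0 < p) (hx : x < 1) (q : ℝ) :
    IntervalIntegrable (fun v => v ^ (p - 1) * (1 - v) ^ (q - 1)) MeasureTheory.volume 0 x :=
  (intervalIntegrable_rpow' (by linarith)).mul_continuousOn
    ((continuousOn_one_sub_rpow _).mono (uIcc_zero_subset_Iio_one hx))

lemma hasDerivAt_rpow_mul_one_sub_rpow (p q : ℝ) {v : ℝ} (hv0 : 0 < v) (hv1 : v < 1) :
    HasDerivAt (fun w => w ^ p * (1 - w) ^ q)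
      (p * (v ^ (p - 1) * (1 - v) ^ (q - 1)) - (p + q) * (v ^ p * (1 - v) ^ (q - 1))) v := by
  have h1v : 1 - v ≠ 0 := sub_ne_zero.2 hv1.ne'
  refine ((hasDerivAt_rpow_const (Or.inl hv0.ne')).mul
    (((hasDerivAt_id v).const_sub 1).rpow_const (Or.inl h1v))).congr_deriv ?_
  simp only [id]
  rw [rpow_sub_one hv0.ne', rpow_sub_one h1v]
  field_simp
  ring

lemma rpow_mul_one_sub_rpow_eq_sub_incompleteBeta (hp : 0 < p) (hx0 : 0 ≤ x) (hx1 : x < 1)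
    (q : ℝ) :
    x ^ p * (1 - x) ^ q = p * incompleteBeta x p q - (p + q) * incompleteBeta x (p + 1) q := by
  have hint := intervalIntegrable_incompleteBeta (add_pos hp one_pos) hx1 q
  simp only [add_sub_cancel_right] at hint
  have hcont : ContinuousOn (fun w => w ^ p * (1 - w) ^ q) (Icc 0 x) :=
    (continuousOn_id.rpow_const fun _ _ => Or.inr hp.le).mul
      ((continuousOn_one_sub_rpow q).mono fun v hv => mem_Iio.2 (hv.2.trans_lt hx1))
  have hftc := integral_eq_sub_of_hasDerivAt_of_le hx0 hcont
    (fun v hv => hasDerivAt_rpow_mul_one_sub_rpow p q hv.1 (hv.2.trans hx1))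
    (((intervalIntegrable_incompleteBeta hp hx1 q).const_mul p).sub (hint.const_mul (p + q)))
  rw [integral_sub ((intervalIntegrable_incompleteBeta hp hx1 q).const_mul p)
    (hint.const_mul (p + q)), integral_const_mul, integral_const_mul,
    zero_rpow hp.ne', zero_mul, sub_zero] at hftc
  simp only [incompleteBeta, add_sub_cancel_right, hftc]

lemma incompleteBeta_nonneg (hx0 : 0 ≤ x) (hx1 : x ≤ 1) (p q : ℝ) : 0 ≤ incompleteBeta x p q :=
  integral_nonneg hx0 fun v hv =>
    mul_nonneg (rpow_nonneg hv.1 _) (rpow_nonneg (by linarith [hv.2]) _)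

lemma one_sub_rpow_le_max {v : ℝ} (hv0 : 0 ≤ v) (hvx : v ≤ x) (hx1 : x < 1) (r : ℝ) :
    (1 - v) ^ r ≤ max 1 ((1 - x) ^ r) := by
  rcases le_or_gt 0 r with hr | hr
  · exact le_max_of_le_left (rpow_le_one (by linarith) (by linarith) hr)
  · exact le_max_of_le_right (rpow_le_rpow_of_nonpos (by linarith) (by linarith) hr.le)

lemma incompleteBeta_le (hp : 0 < p) (hx0 : 0 ≤ x) (hx1 : x < 1) (q : ℝ) :
    incompleteBeta x p q ≤ max 1 ((1 - x) ^ (q - 1)) * (x ^ p / p) := by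
  set M := max 1 ((1 - x) ^ (q - 1))
  have hpow : IntervalIntegrable (fun v : ℝ => v ^ (p - 1)) MeasureTheory.volume 0 x :=
    intervalIntegrable_rpow' (by linarith)
  calc incompleteBeta x p q ≤ ∫ v in (0 : ℝ)..x, M * v ^ (p - 1) :=
        integral_mono_on hx0 (intervalIntegrable_incompleteBeta hp hx1 q) (hpow.const_mul M)
          fun v hv => by
            rw [mul_comm M]
            exact mul_le_mul_of_nonneg_left (one_sub_rpow_le_max hv.1 hv.2 hx1 _)
              (rpow_nonneg hv.1 _)
    _ = M * (x ^ p / p) := by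
        rw [integral_const_mul, integral_rpow (Or.inl (by linarith)), sub_add_cancel,
          zero_rpow hp.ne', sub_zero]

lemma gamma_div_gamma_mul_rpow_eq_sub (hs : 0 < s) (hsq : s + q ≠ 0) (hx0 : 0 ≤ x)
    (hx1 : x < 1) :
    Gamma (s + q) / Gamma (s + 1) * (x ^ s * (1 - x) ^ q) =
      Gamma (s + q) / Gamma s * incompleteBeta x s q -
        Gamma (s + 1 + q) / Gamma (s + 1) * incompleteBeta x (s + 1) q := by
  have hΓ : Gamma s ≠ 0 := (Gamma_pos_of_pos hs).ne'
  rw [rpow_mul_one_sub_rpow_eq_sub_incompleteBeta hs hx0 hx1, Gamma_add_one hs.ne',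
    add_right_comm, Gamma_add_one hsq]
  field_simp

lemma gamma_div_gamma_mul_incompleteBeta_le (hs : 0 < s) (hsq : 0 < s + q) (hx0 : 0 ≤ x)
    (hx1 : x < 1) :
    Gamma (s + q) / Gamma s * incompleteBeta x s q ≤
      max 1 ((1 - x) ^ (q - 1)) * (Gamma (s + q) / Gamma (s + 1) * x ^ s) := by
  have hΓ := Gamma_pos_of_pos hs
  calc Gamma (s + q) / Gamma s * incompleteBeta x s q
      ≤ Gamma (s + q) / Gamma s * (max 1 ((1 - x) ^ (q - 1)) * (x ^ s / s)) :=
        mul_le_mul_of_nonneg_left (incompleteBeta_le hs hx0 hx1 q)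
          (div_pos (Gamma_pos_of_pos hsq) hΓ).le
    _ = _ := by
        rw [Gamma_add_one hs.ne']
        field_simp

lemma tendsto_add_div_add_atTop (s t : ℝ) :
    Tendsto (fun j : ℕ => (s + j) / (t + j)) atTop (𝓝 1) := by
  have h := (tendsto_const_nhds (x := s)).div_atTop
    (tendsto_atTop_add_const_right atTop t tendsto_natCast_atTop_atTop)
  rw [← zero_add 1]
  refine (h.add (tendsto_natCast_div_add_atTop t)).congr fun j => ?_
  rw [add_comm t, ← add_div]

lemma summable_gamma_div_gamma_mul_pow (hs : 0 < s) (ht : 0 < t) (hx : |x| < 1) :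
    Summable fun j : ℕ => Gamma (s + j) / Gamma (t + j) * x ^ j := by
  rcases eq_or_ne x 0 with rfl | hx0
  · refine summable_of_ne_finset_zero (s := {0}) fun j hj => ?_
    rw [zero_pow (by simpa using hj), mul_zero]
  have hpos : ∀ j : ℕ, 0 < Gamma (s + j) / Gamma (t + j) := fun j =>
    div_pos (Gamma_pos_of_pos (by positivity)) (Gamma_pos_of_pos (by positivity))
  refine summable_of_ratio_test_tendsto_lt_one hx
    (Eventually.of_forall fun j => mul_ne_zero (hpos j).ne' (pow_ne_zero _ hx0)) ?_
  have hlim := (tendsto_add_div_add_atTop s t).mul_const |x|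
  rw [one_mul] at hlim
  refine hlim.congr fun j => ?_
  have hsj : s + j ≠ 0 := by positivity
  have htj : t + j ≠ 0 := by positivity
  have hΓt := (Gamma_pos_of_pos (show 0 < t + j by positivity)).ne'
  have hsucc : Gamma (s + ↑(j + 1)) / Gamma (t + ↑(j + 1)) * x ^ (j + 1) =
      ((s + j) / (t + j) * x) * (Gamma (s + j) / Gamma (t + j) * x ^ j) := by
    push_cast
    rw [← add_assoc, ← add_assoc, Gamma_add_one hsj, Gamma_add_one htj, pow_succ]
    field_simp
  rw [hsucc, norm_mul, mul_div_assoc, div_self (norm_ne_zero_iff.2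
    (mul_ne_zero (hpos j).ne' (pow_ne_zero _ hx0))), mul_one, norm_mul,
    Real.norm_of_nonneg (div_pos (by positivity) (by positivity)).le, Real.norm_eq_abs]

theorem hasSum_gamma_div_gamma_mul_pow (hp : 0 < p) (hpq : 0 < p + q) (hx0 : 0 < x)
    (hx1 : x < 1) :
    HasSum (fun j : ℕ => Gamma (p + q + j) / Gamma (p + 1 + j) * x ^ j)
      (x ^ (-p) * (1 - x) ^ (-q) * (Gamma (p + q) / Gamma p * incompleteBeta x p q)) := by
  set e : ℕ → ℝ := fun j => Gamma (p + j + q) / Gamma (p + j) * incompleteBeta x (p + j) q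
    with he
  set K := x ^ p * (1 - x) ^ q
  have hpj (j : ℕ) : 0 < p + j := by positivity
  have hpjq (j : ℕ) : 0 < p + j + q := by rw [add_right_comm]; positivity
  have hxp := rpow_pos_of_pos hx0 p
  have h1xq := rpow_pos_of_pos (sub_pos.2 hx1) q
  have hK : 0 < K := mul_pos hxp h1xq
  have hshift : ∀ j : ℕ, Gamma (p + j + q) / Gamma (p + j + 1) * x ^ (p + j) =
      Gamma (p + q + j) / Gamma (p + 1 + j) * x ^ j * x ^ p := fun j => by
    rw [add_right_comm p (j : ℝ) q, add_right_comm p (j : ℝ) 1, rpow_add hx0, rpow_natCast]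
    ring
  have hterm : ∀ j : ℕ, Gamma (p + q + j) / Gamma (p + 1 + j) * x ^ j * K = e j - e (j + 1) :=
    fun j => by
      have h := gamma_div_gamma_mul_rpow_eq_sub (hpj j) (hpjq j).ne' hx0.le hx1
      simp only [he, Nat.cast_succ, ← add_assoc, ← h, ← mul_assoc, hshift]
      ring
  have hsum := summable_gamma_div_gamma_mul_pow (s := p + q) (t := p + 1) hpq (by linarith)
    (by rwa [abs_of_pos hx0])
  have htail : Tendsto e atTop (𝓝 0) := by
    refine squeeze_zero (fun j => mul_nonneg (div_pos (Gamma_pos_of_pos (hpjq j))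
        (Gamma_pos_of_pos (hpj j))).le (incompleteBeta_nonneg hx0.le hx1.le _ _))
      (fun j => (gamma_div_gamma_mul_incompleteBeta_le (hpj j) (hpjq j) hx0.le hx1).trans_eq
        (by rw [hshift])) ?_
    simpa using (hsum.tendsto_atTop_zero.mul_const (x ^ p)).const_mul
      (max 1 ((1 - x) ^ (q - 1)))
  have hK' : HasSum (fun j : ℕ => Gamma (p + q + j) / Gamma (p + 1 + j) * x ^ j * K) (e 0) := by
    rw [(hsum.mul_right K).hasSum_iff_tendsto_nat]
    simp_rw [hterm, Finset.sum_range_sub']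
    simpa using tendsto_const_nhds.sub htail
  have hval : e 0 = x ^ (-p) * (1 - x) ^ (-q) *
      (Gamma (p + q) / Gamma p * incompleteBeta x p q) * K := by
    rw [rpow_neg hx0.le, rpow_neg (sub_pos.2 hx1).le]
    simp only [he, Nat.cast_zero, add_zero, K]
    field_simp [hxp.ne', h1xq.ne']
  rw [hval] at hK'
  exact (hasSum_mul_right_iff hK.ne').mp hK'

theorem hasSum_ite_le_gamma_div_gamma_mul_pow {n : ℕ} {β a : ℝ} (hβn : β < n) (hna : 0 < n + a)
    (hx0 : 0 < x) (hx1 : x < 1) :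
    HasSum
      (fun k : ℕ => (if n ≤ k then Gamma ((k : ℝ) + a) / Gamma ((k : ℝ) + 1 - β) else 0) * x ^ k)
      (x ^ β * (1 - x) ^ (-(β + a)) *
        (Gamma (n + a) / Gamma (n - β) * incompleteBeta x (n - β) (β + a))) := by
  have hS := hasSum_gamma_div_gamma_mul_pow (p := n - β) (q := β + a) (sub_pos.2 hβn)
    (by linarith) hx0 hx1
  rw [show (n : ℝ) - β + (β + a) = n + a by ring] at hS
  have hpow : x ^ n * x ^ (-(n - β)) = x ^ β := by
    rw [← rpow_natCast, ← rpow_add hx0, neg_sub, add_sub_cancel]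
  have hfun : (fun j : ℕ => (if n ≤ j + n then Gamma (((j + n : ℕ) : ℝ) + a) /
      Gamma (((j + n : ℕ) : ℝ) + 1 - β) else 0) * x ^ (j + n)) =
      fun j : ℕ => x ^ n * (Gamma (n + a + j) / Gamma (n - β + 1 + j) * x ^ j) :=
    funext fun j => by
      rw [if_pos (Nat.le_add_left _ _), pow_add]
      push_cast
      ring_nf
  rw [← hasSum_nat_add_iff' n, Finset.sum_eq_zero fun k hk => by
    rw [if_neg (not_le.2 (Finset.mem_range.1 hk)), zero_mul], sub_zero, hfun, ← hpow,
    mul_assoc (x ^ n), mul_assoc (x ^ n)]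
  exact hS.mul_left _

end

/-- For `ε⁻¹ = N + α ∉ ℕ`, `α ∈ (0,1)`, `a > -2` and `0 ≤ x < 1`, the value
`T^ε[(·)^{N+1}](x) = x^{ε⁻¹}(1-x)^{-(ε⁻¹+a)} ∫_0^x (1-v)^{ε⁻¹+a-1} v^{-α} dv`
admits the absolutely convergent power-series representation
`(Γ(1-α)/Γ(N+1+a)) Σ_{k=N+1}^∞ (Γ(k+a)/Γ(k+1-ε⁻¹)) x^k`. -/
theorem stmt17 (N : ℕ) (hN : 1 ≤ N) (α a : ℝ) (hα : α ∈ Set.Ioo (0 : ℝ) 1)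
    (ha : -2 < a) :
    ∀ x : ℝ, 0 ≤ x → x < 1 →
      Summable (fun k : ℕ => |(if N + 1 ≤ k then
        Real.Gamma ((k : ℝ) + a) / Real.Gamma ((k : ℝ) + 1 - ((N : ℝ) + α)) else 0) * x ^ k|) ∧
      x ^ ((N : ℝ) + α) * (1 - x) ^ (-(((N : ℝ) + α) + a)) *
          ∫ v in (0 : ℝ)..x, (1 - v) ^ (((N : ℝ) + α) + a - 1) * v ^ (-α)
        = Real.Gamma (1 - α) / Real.Gamma ((N : ℝ) + 1 + a) *
            ∑' k : ℕ, (if N + 1 ≤ k then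
              Real.Gamma ((k : ℝ) + a) / Real.Gamma ((k : ℝ) + 1 - ((N : ℝ) + α)) else 0)
              * x ^ k := by
  intro x hx0 hx1
  have hN1a : 0 < (N : ℝ) + 1 + a := by
    have : (1 : ℝ) ≤ N := by exact_mod_cast hN
    linarith
  rcases hx0.eq_or_lt with rfl | hx
  · have hterm (k : ℕ) : (if N + 1 ≤ k then
        Gamma ((k : ℝ) + a) / Gamma ((k : ℝ) + 1 - ((N : ℝ) + α)) else 0) * (0 : ℝ) ^ k = 0 := by
      split_ifs with hk
      · rw [zero_pow (by omega), mul_zero]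
      · rw [zero_mul]
    simp only [hterm, abs_zero, summable_zero, tsum_zero, mul_zero, true_and]
    rw [zero_rpow (by linarith [hα.1, hN1a]), zero_mul, zero_mul]
  have key := hasSum_ite_le_gamma_div_gamma_mul_pow (n := N + 1) (β := N + α) (a := a)
    (by push_cast; linarith [hα.2]) (by push_cast; exact hN1a) hx hx1
  have h1α : ((N + 1 : ℕ) : ℝ) - (N + α) = 1 - α := by push_cast; ring
  have hB : incompleteBeta x (1 - α) (N + α + a) =
      ∫ v in (0 : ℝ)..x, (1 - v) ^ (((N : ℝ) + α) + a - 1) * v ^ (-α) := by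
    simp only [incompleteBeta, sub_sub_cancel_left, mul_comm]
  have hΓ1 := (Gamma_pos_of_pos (sub_pos.2 hα.2)).ne'
  have hΓ2 := (Gamma_pos_of_pos hN1a).ne'
  refine ⟨summable_abs_iff.2 key.summable, ?_⟩
  rw [key.tsum_eq, h1α, hB]
  push_cast
  field_simp
end

section
/- For ε^{-1} = N+α ∉ ℕ with α ∈ (0,1) and any fixed x with 0 < |x| < 1, the quantity |V̄^ε(x)| = |(Γ(α)Γ(1-α)/(εΓ(ε^{-1})))·Σ_{k=N}^∞ (Γ(k+a)/Γ(k+1-ε^{-1}))x^k| tends to infinity as α → 0⁺ and as α → 1⁻ (with N and a > -2 fixed), because Γ(α)Γ(1-α) = π/sin(πα) → ∞ while the remaining factor stays bounded away from 0. -/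
/-!
By the reflection formula, `Γ(α)Γ(1-α) = π / sin(πα) → +∞` at both ends of `(0,1)`. The remaining
factor `(N+α) Γ(N+α)⁻¹ ∑ₖ Γ(k+a)/Γ(k+1-N-α) xᵏ` is continuous on `[0,1]`: `1/Γ` is entire, and for
`k ≥ N+2` the terms are dominated, uniformly in `α`, by those of the convergent series
`|x|^(N+2) ∑ⱼ Γ(j+N+2+a)/j! |x|ʲ`. Its values at `α = 0, 1` are nonzero: at an integer `α = n` the
series collapses (`1/Γ` vanishes at the nonpositive integers) to `x^(N+n) ∑ⱼ Γ(j+c)/j! xʲ` with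
`c = N+n+a > -1`, which is `Γ(c) (1-x)^(-c)` by the binomial series, or `-log(1-x)` if `c = 0`.
-/

open Filter Topology

/-- The series `V̄^ε(x̄)` with `ε⁻¹ = N + α`. -/
noncomputable def Vbar (N : ℕ) (α a x : ℝ) : ℝ :=
  Real.Gamma α * Real.Gamma (1 - α) / (((N : ℝ) + α)⁻¹ * Real.Gamma ((N : ℝ) + α)) *
    ∑' k : ℕ, (if N ≤ k then
      Real.Gamma ((k : ℝ) + a) / Real.Gamma ((k : ℝ) + 1 - ((N : ℝ) + α)) else 0) * x ^ k

open Real Set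

namespace Real

lemma continuous_inv_Gamma : Continuous fun s : ℝ => (Gamma s)⁻¹ := by
  have h := Complex.continuous_re.comp
    (Complex.differentiable_one_div_Gamma.continuous.comp Complex.continuous_ofReal)
  convert h using 2 with s
  simp only [Function.comp_apply, Complex.Gamma_ofReal, ← Complex.ofReal_inv, Complex.ofReal_re]

lemma Gamma_nat_add_one_le_Gamma {n : ℕ} {t : ℝ} (ht : n + 2 ≤ t) :
    Gamma (n + 1) ≤ Gamma t := by
  have hn0 : (0 : ℝ) ≤ n := n.cast_nonneg
  have hn : Gamma (n + 1) ≤ Gamma (n + 2) := by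
    rw [show (n : ℝ) + 2 = n + 1 + 1 by ring, Gamma_add_one (s := n + 1) (by positivity)]
    exact le_mul_of_one_le_left (Gamma_pos_of_pos (by positivity)).le (by linarith)
  exact hn.trans (Gamma_strictMonoOn_Ici.monotoneOn (by simp only [mem_Ici]; linarith)
    (by simp only [mem_Ici]; linarith) ht)

lemma tendsto_Gamma_mul_Gamma_one_sub_atTop {t : ℝ} (ht : sin (π * t) = 0) :
    Tendsto (fun α => Gamma α * Gamma (1 - α)) (𝓝[Ioo 0 1] t) atTop := by
  have hsin : Tendsto (fun α => sin (π * α)) (𝓝[Ioo 0 1] t) (𝓝[>] 0) := by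
    refine tendsto_nhdsWithin_iff.mpr ⟨?_, ?_⟩
    · rw [← ht]
      exact ((continuous_sin.comp (continuous_const.mul continuous_id)).tendsto t).mono_left
        nhdsWithin_le_nhds
    · filter_upwards [self_mem_nhdsWithin] with α hα
      exact sin_pos_of_pos_of_lt_pi (mul_pos pi_pos hα.1) (mul_lt_of_lt_one_right pi_pos hα.2)
  refine ((tendsto_inv_nhdsGT_zero.comp hsin).const_mul_atTop pi_pos).congr fun α => ?_
  simp [Gamma_mul_Gamma_one_sub, div_eq_mul_inv]

lemma Gamma_add_nat_eq_ascPochhammer_mul {c : ℝ} (hc : ∀ m : ℕ, c ≠ -m) (n : ℕ) :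
    Gamma (c + n) = (ascPochhammer ℝ n).eval c * Gamma c := by
  induction n with
  | zero => simp
  | succ n ih =>
    have hcn : c + n ≠ 0 := fun h => hc n (by linarith)
    rw [Nat.cast_succ, ← add_assoc, Gamma_add_one hcn, ih, ascPochhammer_succ_eval]
    ring

lemma Gamma_nat_add_div_Gamma_nat_add_one {c : ℝ} (hc : ∀ m : ℕ, c ≠ -m) (n : ℕ) :
    Gamma (n + c) / Gamma (n + 1) = Gamma c * Ring.choose (c + n - 1) n := by
  have hfac : (n.factorial : ℝ) * Ring.choose (c + n - 1) n = (ascPochhammer ℝ n).eval c := by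
    rw [← Ring.multichoose_eq, ← Polynomial.ascPochhammer_smeval_eq_eval,
      ← Ring.factorial_nsmul_multichoose_eq_ascPochhammer, nsmul_eq_mul]
  rw [Gamma_nat_eq_factorial, add_comm, Gamma_add_nat_eq_ascPochhammer_mul hc, ← hfac]
  field_simp

lemma hasSum_Gamma_nat_add_div_mul_pow {c y : ℝ} (hc : ∀ m : ℕ, c ≠ -m) (hy : |y| < 1) :
    HasSum (fun n : ℕ => Gamma (n + c) / Gamma (n + 1) * y ^ n) (Gamma c / (1 - y) ^ c) := by
  have hy' : y ∈ Metric.eball (0 : ℝ) 1 := by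
    simpa [Metric.mem_eball, edist_dist, Real.dist_eq] using hy
  have h := ((one_div_one_sub_rpow_hasFPowerSeriesOnBall_zero c).hasSum hy').mul_left (Gamma c)
  simp only [FormalMultilinearSeries.ofScalars_apply_eq, smul_eq_mul, zero_add] at h
  rw [div_eq_mul_one_div]
  refine h.congr_fun fun n => ?_
  rw [Gamma_nat_add_div_Gamma_nat_add_one hc]
  ring

lemma hasSum_Gamma_nat_div_mul_pow {y : ℝ} (hy : |y| < 1) :
    HasSum (fun n : ℕ => Gamma n / Gamma (n + 1) * y ^ n) (-log (1 - y)) := by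
  refine (hasSum_nat_add_iff' 1).mp ?_
  simp only [Finset.range_one, Finset.sum_singleton, CharP.cast_eq_zero, Gamma_zero, zero_div,
    zero_mul, sub_zero]
  refine (hasSum_pow_div_log_of_abs_lt_one hy).congr_fun fun n => ?_
  have hn : (n : ℝ) + 1 ≠ 0 := by positivity
  push_cast
  rw [Gamma_add_one hn, pow_succ]
  field_simp [(Gamma_pos_of_pos (by positivity : (0 : ℝ) < n + 1)).ne']

lemma exists_hasSum_Gamma_nat_add_div_mul_pow_ne_zero {c y : ℝ} (hc : -1 < c) (hy0 : y ≠ 0)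
    (hy : |y| < 1) : ∃ s ≠ 0, HasSum (fun n : ℕ => Gamma (n + c) / Gamma (n + 1) * y ^ n) s := by
  have h1y : 0 < 1 - y := by linarith [le_abs_self y]
  rcases eq_or_ne c 0 with rfl | hc0
  · refine ⟨-log (1 - y), neg_ne_zero.mpr (log_ne_zero_of_pos_of_ne_one h1y (by simpa)), ?_⟩
    simpa using hasSum_Gamma_nat_div_mul_pow hy
  · have hc' : ∀ m : ℕ, c ≠ -m := by
      rintro (_ | m)
      · simpa using hc0
      · push_cast
        intro h
        linarith [m.cast_nonneg (α := ℝ)]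
    exact ⟨_, div_ne_zero (Gamma_ne_zero hc') (rpow_pos_of_pos h1y c).ne',
      hasSum_Gamma_nat_add_div_mul_pow hc' hy⟩

end Real

noncomputable def vbarTerm (N : ℕ) (a x α : ℝ) (k : ℕ) : ℝ :=
  (if N ≤ k then Gamma ((k : ℝ) + a) / Gamma ((k : ℝ) + 1 - ((N : ℝ) + α)) else 0) * x ^ k

lemma Vbar_eq_mul (N : ℕ) (α a x : ℝ) : Vbar N α a x =
    Gamma α * Gamma (1 - α) * ((N + α) * (Gamma (N + α))⁻¹ * ∑' k, vbarTerm N a x α k) := by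
  unfold Vbar vbarTerm
  rw [div_eq_mul_inv (Gamma α * Gamma (1 - α)), mul_inv, inv_inv]
  ring

lemma continuous_vbarTerm (N : ℕ) (a x : ℝ) (k : ℕ) :
    Continuous fun α => vbarTerm N a x α k := by
  unfold vbarTerm
  split_ifs
  · simp only [div_eq_mul_inv]
    exact (continuous_const.mul (continuous_inv_Gamma.comp (by fun_prop))).mul continuous_const
  · exact continuous_const

lemma vbarTerm_add_eq (N : ℕ) (a x α : ℝ) (n j : ℕ) :
    vbarTerm N a x α (j + (N + n)) =
      Gamma (j + (N + n + a)) / Gamma (j + (n + 1) - α) * x ^ (j + (N + n)) := by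
  rw [vbarTerm, if_pos (by omega)]
  push_cast
  ring_nf

lemma norm_vbarTerm_add_le (N : ℕ) {a : ℝ} (ha : -2 < a) (x : ℝ) {α : ℝ} (hα : α ∈ Icc 0 1)
    (j : ℕ) :
    ‖vbarTerm N a x α (j + (N + 2))‖ ≤
      Gamma (j + (N + 2 + a)) / Gamma (j + 1) * |x| ^ j * |x| ^ (N + 2) := by
  have hj : (0 : ℝ) ≤ j := j.cast_nonneg
  have hc : 0 < (j : ℝ) + (N + 2 + a) := by linarith [N.cast_nonneg (α := ℝ)]
  have h := vbarTerm_add_eq N a x α 2 j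
  push_cast at h
  rw [h, norm_mul, norm_div, Real.norm_of_nonneg (Gamma_pos_of_pos hc).le,
    Real.norm_of_nonneg (Gamma_pos_of_pos (by linarith [hα.2])).le, norm_pow, Real.norm_eq_abs,
    pow_add, ← mul_assoc]
  gcongr
  exact Gamma_nat_add_one_le_Gamma (by linarith [hα.2])

lemma continuousOn_tsum_vbarTerm (N : ℕ) {a x : ℝ} (ha : -2 < a) (hx : |x| < 1) :
    ContinuousOn (fun α => ∑' k, vbarTerm N a x α k) (Icc 0 1) := by
  have hc : ∀ m : ℕ, (N + 2 + a : ℝ) ≠ -m := fun m => by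
    linarith [N.cast_nonneg (α := ℝ), m.cast_nonneg (α := ℝ)]
  have hu := ((hasSum_Gamma_nat_add_div_mul_pow hc (by rwa [abs_abs])).summable.mul_right
    (|x| ^ (N + 2)))
  have hsplit : ∀ α ∈ Icc (0 : ℝ) 1, ∑ k ∈ Finset.range (N + 2), vbarTerm N a x α k +
      ∑' j, vbarTerm N a x α (j + (N + 2)) = ∑' k, vbarTerm N a x α k := fun α hα =>
    ((summable_nat_add_iff (N + 2)).mp
      (hu.of_norm_bounded (norm_vbarTerm_add_le N ha x hα))).sum_add_tsum_nat_add (N + 2)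
  refine ContinuousOn.congr ?_ fun α hα => (hsplit α hα).symm
  exact (continuousOn_finsetSum _ fun k _ => (continuous_vbarTerm N a x k).continuousOn).add
    (continuousOn_tsum (fun j => (continuous_vbarTerm N a x _).continuousOn) hu
      fun j α hα => norm_vbarTerm_add_le N ha x hα j)

lemma vbarTerm_natCast_of_lt (N : ℕ) (a x : ℝ) {n k : ℕ} (hk : k < N + n) :
    vbarTerm N a x n k = 0 := by
  unfold vbarTerm
  split_ifs
  · obtain ⟨m, hm⟩ : ∃ m, N + n = k + 1 + m := ⟨N + n - (k + 1), by omega⟩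
    have hm' : (N : ℝ) + n = k + 1 + m := by exact_mod_cast hm
    rw [hm', show (k : ℝ) + 1 - (k + 1 + m) = -m by ring, Gamma_neg_nat_eq_zero, div_zero,
      zero_mul]
  · exact zero_mul _

lemma tsum_vbarTerm_natCast_ne_zero (N n : ℕ) {a x : ℝ} (hc : -1 < N + n + a) (hx0 : x ≠ 0)
    (hx : |x| < 1) : ∑' k, vbarTerm N a x n k ≠ 0 := by
  obtain ⟨s, hs0, hs⟩ := exists_hasSum_Gamma_nat_add_div_mul_pow_ne_zero hc hx0 hx
  have hshift : HasSum (fun j => vbarTerm N a x n (j + (N + n)))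
      (x ^ (N + n) * s - ∑ k ∈ Finset.range (N + n), vbarTerm N a x n k) := by
    rw [Finset.sum_eq_zero fun k hk => vbarTerm_natCast_of_lt N a x (Finset.mem_range.mp hk),
      sub_zero]
    refine (hs.mul_left (x ^ (N + n))).congr_fun fun j => ?_
    rw [vbarTerm_add_eq, show (j : ℝ) + (n + 1) - n = j + 1 by ring, pow_add]
    ring
  rw [((hasSum_nat_add_iff' (N + n)).mp hshift).tsum_eq]
  exact mul_ne_zero (pow_ne_zero _ hx0) hs0

/-- For fixed `N`, `a > -2` and `0 < |x| < 1`, `|V̄^ε(x)|` tends to infinity as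
`α → 0⁺` and as `α → 1⁻` (within `(0,1)`). -/
theorem stmt19 (N : ℕ) (hN : 1 ≤ N) (a : ℝ) (ha : -2 < a)
    (x : ℝ) (hx0 : 0 < |x|) (hx1 : |x| < 1) :
    Tendsto (fun α : ℝ => |Vbar N α a x|) (nhdsWithin 0 (Set.Ioo (0 : ℝ) 1)) atTop ∧
    Tendsto (fun α : ℝ => |Vbar N α a x|) (nhdsWithin 1 (Set.Ioo (0 : ℝ) 1)) atTop := by
  have hN' : (1 : ℝ) ≤ N := by exact_mod_cast hN
  have key : ∀ n : ℕ, n ≤ 1 → Tendsto (fun α => |Vbar N α a x|) (𝓝[Ioo 0 1] (n : ℝ)) atTop := by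
    intro n hn
    have hn0 : (0 : ℝ) ≤ n := n.cast_nonneg
    set Q := fun α : ℝ => (N + α) * (Gamma (N + α))⁻¹ * ∑' k, vbarTerm N a x α k
    have hQ : ContinuousWithinAt Q (Ioo 0 1) n :=
      ((by fun_prop : Continuous fun α : ℝ => N + α).continuousWithinAt.mul
        (continuous_inv_Gamma.comp (by fun_prop)).continuousWithinAt).mul
        ((continuousOn_tsum_vbarTerm N ha hx1 n ⟨hn0, by exact_mod_cast hn⟩).mono
          Ioo_subset_Icc_self)
    have hQn : Q n ≠ 0 := by
      have hpos : (0 : ℝ) < N + n := by linarith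
      exact mul_ne_zero (mul_ne_zero hpos.ne' (inv_ne_zero (Gamma_pos_of_pos hpos).ne'))
        (tsum_vbarTerm_natCast_ne_zero N n (by linarith) (abs_pos.mp hx0) hx1)
    have hP := tendsto_Gamma_mul_Gamma_one_sub_atTop (t := n)
      (by rw [mul_comm]; exact sin_nat_mul_pi n)
    refine ((tendsto_abs_atTop_atTop.comp hP).atTop_mul_pos (abs_pos.mpr hQn)
      hQ.tendsto.abs).congr fun α => ?_
    rw [Function.comp_apply, ← abs_mul, Vbar_eq_mul]
  exact ⟨by simpa using key 0 zero_le_one, by simpa using key 1 le_rfl⟩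
end
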